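/- arXiv:2602.18989 — 4 statements merged into one kernel-verified Lean document; each statement's English description precedes it below -/
import Mathlib

section
/- Fix p ∈ (0,1) and let α = 1/(p^p (1−p)^{1−p}). For every q ∈ (0,1) with q ≠ p there exist η > α and c > 0 such that for all n ≥ 2, the (1+1) EA with mutation rate q on DistantSteppingStones_p over {0,1}^n satisfies E[T(q)] ≥ c · η^n. -/
open Finset
open scoped Classical

namespace DSS

/-- Number of ones of a bit string. -/
def ones {n : ℕ} (x : Fin n → Bool) : ℕ := (Finset.univ.filter fun i => x i = true).card

/-- Hamming distance between two bit strings. -/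
def hamming {n : ℕ} (x y : Fin n → Bool) : ℕ := (Finset.univ.filter fun i => x i ≠ y i).card

/-- The all-ones string. -/
def allOnes (n : ℕ) : Fin n → Bool := fun _ => true

/-- Probability that mutating `x` (flipping each bit independently with probability `q`)
produces exactly `y`. -/
noncomputable def flipProb {n : ℕ} (q : ℝ) (x y : Fin n → Bool) : ℝ :=
  q ^ hamming x y * (1 - q) ^ (n - hamming x y)

/-- Probability that the offspring of `x` under mutation rate `q` lies in the set `E`. -/
noncomputable def mutProb {n : ℕ} (q : ℝ) (x : Fin n → Bool) (E : Set (Fin n → Bool)) : ℝ :=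
  ∑ y : Fin n → Bool, if y ∈ E then flipProb q x y else 0

/-- One-step transition probability of the (1+1) EA on fitness `f` with mutation rate `q`. -/
noncomputable def eaStep {n : ℕ} (f : (Fin n → Bool) → ℝ) (q : ℝ) (x y : Fin n → Bool) : ℝ :=
  (if f x ≤ f y then flipProb q x y else 0) +
    (if y = x then ∑ z : Fin n → Bool, if f z < f x then flipProb q x z else 0 else 0)

/-- Sub-probability mass of the (1+1) EA chain killed upon entering `A`, starting from the
initial mass function `μ0`: `eaKilled f q A μ0 t y` is the probability that the chain has
avoided `A` at all times `0,…,t` and is at `y` at time `t`. -/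
noncomputable def eaKilled {n : ℕ} (f : (Fin n → Bool) → ℝ) (q : ℝ)
    (A : Set (Fin n → Bool)) (μ0 : (Fin n → Bool) → ℝ) : ℕ → (Fin n → Bool) → ℝ
  | 0, y => if y ∈ A then 0 else μ0 y
  | t + 1, y => if y ∈ A then 0
      else ∑ x : Fin n → Bool, eaKilled f q A μ0 t x * eaStep f q x y

/-- The uniform distribution on bit strings. -/
noncomputable def uniform (n : ℕ) : (Fin n → Bool) → ℝ := fun _ => (1 : ℝ) / 2 ^ n

/-- Expected hitting time of the set `A` for the (1+1) EA on `f` with mutation rate `q` and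
initial distribution `μ0`, via `E[T] = ∑_{t ≥ 0} P(T > t)`. -/
noncomputable def eaHitTime {n : ℕ} (f : (Fin n → Bool) → ℝ) (q : ℝ)
    (A : Set (Fin n → Bool)) (μ0 : (Fin n → Bool) → ℝ) : ℝ :=
  ∑' t : ℕ, ∑ y : Fin n → Bool, eaKilled f q A μ0 t y

/-- The set of global maxima of a fitness function. -/
def maxSet {n : ℕ} (f : (Fin n → Bool) → ℝ) : Set (Fin n → Bool) := {x | ∀ y, f y ≤ f x}

/-- Expected runtime `E[T(q)]` of the (1+1) EA on `f` with mutation rate `q`: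
the expectation of the least `t ≥ 0` such that `X_t` is a global maximum of `f`,
started from the uniform distribution. -/
noncomputable def expectedRuntime {n : ℕ} (f : (Fin n → Bool) → ℝ) (q : ℝ) : ℝ :=
  eaHitTime f q (maxSet f) (uniform n)

/-- The map `f_p(x) = p(1-x) + (1-p)x`. -/
noncomputable def fp (p : ℝ) (x : ℝ) : ℝ := p * (1 - x) + (1 - p) * x

/-- `s p k = f_p^{(k)}(1)`. -/
noncomputable def s (p : ℝ) (k : ℕ) : ℝ := (fp p)^[k] 1

/-- `N(n)`: the least `k ≥ 1` with `⌊n s_k⌋ = ⌊n/2⌋`. -/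
noncomputable def NN (p : ℝ) (n : ℕ) : ℕ :=
  sInf {k : ℕ | 1 ≤ k ∧ ⌊(n : ℝ) * s p k⌋ = ⌊(n : ℝ) / 2⌋}

/-- `x ∈ S_k`, i.e. the number of ones of `x` is `⌊n s_k⌋`. -/
def inStone (p : ℝ) {n : ℕ} (k : ℕ) (x : Fin n → Bool) : Prop :=
  (ones x : ℤ) = ⌊(n : ℝ) * s p k⌋

/-- The fitness function `DistantSteppingStones_p`: value `N + 1 - k` on `S_k`
(for the least such `k ≤ N`), and `0` elsewhere. -/
noncomputable def dss (p : ℝ) (n : ℕ) (x : Fin n → Bool) : ℝ :=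
  if ∃ k ≤ NN p n, inStone p k x
  then ((NN p n + 1 - sInf {k : ℕ | k ≤ NN p n ∧ inStone p k x} : ℕ) : ℝ)
  else 0

/-- The union of the stepping stones `S_1, …, S_N`. -/
def stones (p : ℝ) (n : ℕ) : Set (Fin n → Bool) :=
  {x | ∃ k, 1 ≤ k ∧ k ≤ NN p n ∧ inStone p k x}

/-- Sub-probability mass of the pure mutation chain (every offspring accepted) killed upon
entering `A` at times `t ≥ 1`, started at `x0`. -/
noncomputable def pureKilled {n : ℕ} (q : ℝ) (A : Set (Fin n → Bool)) (x0 : Fin n → Bool) :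
    ℕ → (Fin n → Bool) → ℝ
  | 0, y => if y = x0 then 1 else 0
  | t + 1, y => if y ∈ A then 0
      else ∑ x : Fin n → Bool, pureKilled q A x0 t x * flipProb q x y

/-- Expected value of the first time `t ≥ 1` at which the pure mutation chain started at
`x0` lies in `A`, via `E[T] = ∑_{t ≥ 0} P(T > t)`. -/
noncomputable def pureHitTime {n : ℕ} (q : ℝ) (A : Set (Fin n → Bool)) (x0 : Fin n → Bool) : ℝ :=
  ∑' t : ℕ, ∑ y : Fin n → Bool, pureKilled q A x0 t y

/-- Probability that the (1+1) EA on `f` with mutation rate `q`, started uniformly at random,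
visits the set `B` strictly before the set `A`. -/
noncomputable def reachBeforeProb {n : ℕ} (f : (Fin n → Bool) → ℝ) (q : ℝ)
    (A B : Set (Fin n → Bool)) : ℝ :=
  (∑ y : Fin n → Bool, if y ∈ B then uniform n y else 0) +
    ∑' t : ℕ, ∑ x : Fin n → Bool, eaKilled f q (A ∪ B) (uniform n) t x *
      ∑ y : Fin n → Bool, if y ∈ B then eaStep f q x y else 0

/-- Probability that, within the next `M` iterations of the (1+1) EA on `f` with mutation
rate `q` started at the current individual `x`, some produced offspring (accepted or not)
lies in `G`. -/
noncomputable def offspringReach {n : ℕ} (f : (Fin n → Bool) → ℝ) (q : ℝ)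
    (G : Set (Fin n → Bool)) : ℕ → (Fin n → Bool) → ℝ
  | 0, _ => 0
  | M + 1, x => ∑ y : Fin n → Bool,
      flipProb q x y *
        (if y ∈ G then 1 else offspringReach f q G M (if f x ≤ f y then y else x))




noncomputable def Hf (x : ℝ) : ℝ := -(x * Real.log x + (1 - x) * Real.log (1 - x))

noncomputable def phi (q θ : ℝ) : ℝ := θ * (-Real.log q) + (1 - θ) * (-Real.log (1 - q))

lemma gibbs_le {q θ : ℝ} (hq : q ∈ Set.Ioo (0:ℝ) 1) (hθ : θ ∈ Set.Ioo (0:ℝ) 1) :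
    Hf θ ≤ phi q θ := by
  obtain ⟨hq0, hq1⟩ := hq
  obtain ⟨hθ0, hθ1⟩ := hθ
  have hq1' : (0:ℝ) < 1 - q := by linarith
  have hθ1' : (0:ℝ) < 1 - θ := by linarith
  have h1 : Real.log (q/θ) ≤ q/θ - 1 := Real.log_le_sub_one_of_pos (by positivity)
  have h2 : Real.log ((1-q)/(1-θ)) ≤ (1-q)/(1-θ) - 1 := Real.log_le_sub_one_of_pos (by positivity)
  have e1 : Real.log (q/θ) = Real.log q - Real.log θ := Real.log_div (ne_of_gt hq0) (ne_of_gt hθ0)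
  have e2 : Real.log ((1-q)/(1-θ)) = Real.log (1-q) - Real.log (1-θ) :=
    Real.log_div (ne_of_gt hq1') (ne_of_gt hθ1')
  rw [e1] at h1; rw [e2] at h2
  have k1 : θ * (Real.log q - Real.log θ) ≤ q - θ := by
    have := mul_le_mul_of_nonneg_left h1 (le_of_lt hθ0)
    have hd : θ * (q/θ - 1) = q - θ := by field_simp
    linarith [hd ▸ this]
  have k2 : (1-θ) * (Real.log (1-q) - Real.log (1-θ)) ≤ (1-q) - (1-θ) := by
    have := mul_le_mul_of_nonneg_left h2 (le_of_lt hθ1')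
    have hd : (1-θ) * ((1-q)/(1-θ) - 1) = (1-q) - (1-θ) := by field_simp
    linarith [hd ▸ this]
  unfold Hf phi
  nlinarith [k1, k2]

lemma gibbs_lt {q θ : ℝ} (hq : q ∈ Set.Ioo (0:ℝ) 1) (hθ : θ ∈ Set.Ioo (0:ℝ) 1)
    (hne : θ ≠ q) : Hf θ < phi q θ := by
  obtain ⟨hq0, hq1⟩ := hq
  obtain ⟨hθ0, hθ1⟩ := hθ
  have hq1' : (0:ℝ) < 1 - q := by linarith
  have hθ1' : (0:ℝ) < 1 - θ := by linarith
  have h1 : Real.log (q/θ) < q/θ - 1 := by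
    refine Real.log_lt_sub_one_of_pos (by positivity) ?_
    intro h
    exact hne (by field_simp at h; linarith)
  have h2 : Real.log ((1-q)/(1-θ)) ≤ (1-q)/(1-θ) - 1 := Real.log_le_sub_one_of_pos (by positivity)
  have e1 : Real.log (q/θ) = Real.log q - Real.log θ := Real.log_div (ne_of_gt hq0) (ne_of_gt hθ0)
  have e2 : Real.log ((1-q)/(1-θ)) = Real.log (1-q) - Real.log (1-θ) :=
    Real.log_div (ne_of_gt hq1') (ne_of_gt hθ1')
  rw [e1] at h1; rw [e2] at h2
  have k1 : θ * (Real.log q - Real.log θ) < q - θ := by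
    have := mul_lt_mul_of_pos_left h1 hθ0
    have hd : θ * (q/θ - 1) = q - θ := by field_simp
    linarith [hd ▸ this]
  have k2 : (1-θ) * (Real.log (1-q) - Real.log (1-θ)) ≤ (1-q) - (1-θ) := by
    have := mul_le_mul_of_nonneg_left h2 (le_of_lt hθ1')
    have hd : (1-θ) * ((1-q)/(1-θ) - 1) = (1-q) - (1-θ) := by field_simp
    linarith [hd ▸ this]
  unfold Hf phi
  nlinarith [k1, k2]

lemma Hf_symm (p : ℝ) : Hf (1 - p) = Hf p := by
  unfold Hf
  rw [show (1:ℝ) - (1-p) = p by ring]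
  ring

lemma Hf_strict_mono {x y : ℝ} (hx : 0 < x) (hxy : x < y) (hy : y ≤ 1/2) : Hf x < Hf y := by
  have hyI : y ∈ Set.Ioo (0:ℝ) 1 := ⟨by linarith, by linarith⟩
  have hxI : x ∈ Set.Ioo (0:ℝ) 1 := ⟨hx, by linarith⟩
  have h1 : Hf x < phi y x := gibbs_lt hyI hxI (ne_of_lt hxy)
  have h2 : phi y x ≤ Hf y := by
    have hlog : Real.log y ≤ Real.log (1 - y) := Real.log_le_log (by linarith) (by linarith)
    have h3 : (0:ℝ) ≤ (y - x) * (Real.log (1-y) - Real.log y) :=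
      mul_nonneg (by linarith) (by linarith)
    unfold phi Hf
    nlinarith [h3]
  linarith

noncomputable def thetaLo (p : ℝ) : ℝ := min p (2*p*(1-p))
noncomputable def thetaHi (p : ℝ) : ℝ := max p (1/2)
noncomputable def mExp (p q : ℝ) : ℝ := min (phi q (thetaLo p)) (phi q (thetaHi p))

lemma phi_min {q lo hi θ : ℝ} (h1 : lo ≤ θ) (h2 : θ ≤ hi) :
    min (phi q lo) (phi q hi) ≤ phi q θ := by
  rcases le_total (-Real.log (1-q)) (-Real.log q) with h | h
  · calc min (phi q lo) (phi q hi) ≤ phi q lo := min_le_left _ _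
      _ ≤ phi q θ := by unfold phi; nlinarith
  · calc min (phi q lo) (phi q hi) ≤ phi q hi := min_le_right _ _
      _ ≤ phi q θ := by unfold phi; nlinarith

lemma Hf_lt_mExp {p q : ℝ} (hp : p ∈ Set.Ioo (0:ℝ) 1) (hq : q ∈ Set.Ioo (0:ℝ) 1)
    (hqp : q ≠ p) : Hf p < mExp p q := by
  obtain ⟨hp0, hp1⟩ := hp
  rw [mExp, lt_min_iff]
  rcases lt_trichotomy p (1/2) with h | h | h
  · have hlo : thetaLo p = p := min_eq_left (by nlinarith)
    have hhi : thetaHi p = 1/2 := max_eq_right (le_of_lt h)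
    rw [hlo, hhi]
    constructor
    · exact gibbs_lt hq ⟨hp0, hp1⟩ (Ne.symm hqp)
    · have := Hf_strict_mono hp0 h le_rfl
      have := gibbs_le hq (by norm_num : (1:ℝ)/2 ∈ Set.Ioo (0:ℝ) 1)
      linarith
  · subst h
    have hlo : thetaLo (1/2 : ℝ) = 1/2 := by unfold thetaLo; norm_num
    have hhi : thetaHi (1/2 : ℝ) = 1/2 := by unfold thetaHi; norm_num
    rw [hlo, hhi]
    have := gibbs_lt hq (by norm_num : (1:ℝ)/2 ∈ Set.Ioo (0:ℝ) 1) (Ne.symm hqp)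
    exact ⟨this, this⟩
  · have hlo : thetaLo p = 2*p*(1-p) := min_eq_right (by nlinarith)
    have hhi : thetaHi p = p := max_eq_left (by linarith)
    rw [hlo, hhi]
    constructor
    · have hm : Hf (1-p) < Hf (2*p*(1-p)) :=
        Hf_strict_mono (by linarith) (by nlinarith) (by nlinarith)
      have hg : Hf (2*p*(1-p)) ≤ phi q (2*p*(1-p)) :=
        gibbs_le hq ⟨by nlinarith, by nlinarith⟩
      rw [← Hf_symm p]; linarith
    · exact gibbs_lt hq ⟨hp0, hp1⟩ (Ne.symm hqp)


/-! ### The sequence `s` and the index `N` -/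

lemma s_eq (p : ℝ) : ∀ k, s p k = 1/2 + (1 - 2*p)^k / 2 := by
  intro k
  induction k with
  | zero => simp [s]; norm_num
  | succ k ih =>
      have : s p (k+1) = fp p (s p k) := by
        unfold s
        rw [Function.iterate_succ_apply']
      rw [this, ih]
      unfold fp
      ring

lemma floor_half (n : ℕ) {e : ℝ} (h0 : 0 ≤ e) (h1 : e < 1/2) :
    ⌊(n:ℝ)/2 + e⌋ = ((n/2 : ℕ) : ℤ) := by
  obtain ⟨m, hm | hm⟩ := Nat.even_or_odd' n
  · subst hm
    have h2 : (2*m)/2 = m := by omega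
    rw [h2, Int.floor_eq_iff]
    push_cast
    constructor <;> linarith
  · subst hm
    have h2 : (2*m+1)/2 = m := by omega
    rw [h2, Int.floor_eq_iff]
    push_cast
    constructor <;> linarith

lemma floor_half0 (n : ℕ) : ⌊(n:ℝ)/2⌋ = ((n/2 : ℕ) : ℤ) := by
  have := floor_half n (e := 0) le_rfl (by norm_num)
  simpa using this

lemma NN_spec {p : ℝ} (hp : p ∈ Set.Ioo (0:ℝ) 1) {n : ℕ} (hn : 1 ≤ n) :
    1 ≤ NN p n ∧ ⌊(n : ℝ) * s p (NN p n)⌋ = ⌊(n : ℝ) / 2⌋ := by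
  obtain ⟨hp0, hp1⟩ := hp
  have hnR : (0:ℝ) < n := by exact_mod_cast hn
  have hr : |1 - 2*p| < 1 := by rw [abs_lt]; constructor <;> linarith
  obtain ⟨k0, hk0⟩ := exists_pow_lt_of_lt_one (show (0:ℝ) < 1/n by positivity) hr
  set k := 2*(k0+1) with hk_def
  have hkk : |1 - 2*p| ^ k ≤ |1 - 2*p| ^ k0 :=
    pow_le_pow_of_le_one (abs_nonneg _) hr.le (by omega)
  have hpos : (0:ℝ) ≤ (1 - 2*p)^k := by
    rw [hk_def, pow_mul]
    positivity
  have habs : (1 - 2*p)^k = |1 - 2*p|^k := by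
    rw [← abs_pow, abs_of_nonneg hpos]
  have hlt : (1 - 2*p)^k < 1/n := by rw [habs]; exact lt_of_le_of_lt hkk hk0
  have hmem : k ∈ {k : ℕ | 1 ≤ k ∧ ⌊(n : ℝ) * s p k⌋ = ⌊(n : ℝ) / 2⌋} := by
    refine ⟨by omega, ?_⟩
    rw [s_eq]
    have he : (n:ℝ) * (1/2 + (1 - 2*p)^k/2) = (n:ℝ)/2 + (n * (1 - 2*p)^k)/2 := by ring
    rw [he]
    have h0 : 0 ≤ (n * (1 - 2*p)^k)/2 := by positivity
    have h1 : (n * (1 - 2*p)^k)/2 < 1/2 := by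
      have : (n:ℝ) * (1 - 2*p)^k < n * (1/n) := by
        exact mul_lt_mul_of_pos_left hlt hnR
      rw [mul_one_div, div_self (ne_of_gt hnR)] at this
      linarith
    rw [floor_half n h0 h1, floor_half0 n]
  have hne : {k : ℕ | 1 ≤ k ∧ ⌊(n : ℝ) * s p k⌋ = ⌊(n : ℝ) / 2⌋}.Nonempty := ⟨k, hmem⟩
  exact Nat.sInf_mem hne

lemma one_sub_s_bounds {p : ℝ} (hp : p ∈ Set.Ioo (0:ℝ) 1) {j : ℕ} (hj : 1 ≤ j) :
    thetaLo p ≤ 1 - s p j ∧ 1 - s p j ≤ thetaHi p ∧ 0 < s p j ∧ s p j < 1 := by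
  obtain ⟨hp0, hp1⟩ := hp
  obtain ⟨r, hr_def⟩ : ∃ r : ℝ, r = 1 - 2*p := ⟨_, rfl⟩
  have hr : |r| < 1 := by rw [abs_lt, hr_def]; constructor <;> linarith
  have habs : |r^j| ≤ |r| := by
    rw [abs_pow]
    calc |r|^j ≤ |r|^1 := pow_le_pow_of_le_one (abs_nonneg _) hr.le hj
      _ = |r| := pow_one _
  have h1 : min r 0 ≤ r^j := by
    rcases le_or_gt 0 r with h | h
    · exact le_trans (min_le_right _ _) (pow_nonneg h j)
    · have : r ≤ r^j := by
        have e1 : -|r| ≤ -|r^j| := by linarith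
        have e2 : -|r^j| ≤ r^j := neg_abs_le _
        rw [abs_of_neg h] at e1
        linarith
      exact le_trans (min_le_left _ _) this
  have h2 : r^j ≤ max r (r^2) := by
    rcases le_or_gt 0 r with h | h
    · refine le_trans ?_ (le_max_left _ _)
      calc r^j ≤ r^1 := pow_le_pow_of_le_one h (by linarith [abs_lt.1 hr]) hj
        _ = r := pow_one _
    · rcases Nat.even_or_odd j with he | ho
      · refine le_trans ?_ (le_max_right _ _)
        have hj2 : 2 ≤ j := by
          obtain ⟨m, hm⟩ := he
          omega
        have : r^j = |r|^j := (he.pow_abs r).symm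
        rw [this, ← sq_abs]
        exact pow_le_pow_of_le_one (abs_nonneg _) hr.le hj2
      · exact le_trans (ho.pow_nonpos h.le) (le_trans (sq_nonneg r) (le_max_right _ _))
  have hsj : s p j = 1/2 + r^j/2 := by rw [s_eq, hr_def]
  have hth : 2*p*(1-p) = (1 - r^2)/2 := by rw [hr_def]; ring
  have hpr : p = (1 - r)/2 := by rw [hr_def]; ring
  refine ⟨?_, ?_, ?_, ?_⟩
  · -- thetaLo ≤ 1 - s p j
    rw [hsj]
    rcases max_cases r (r^2) with ⟨hmax, _⟩ | ⟨hmax, _⟩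
    · calc thetaLo p ≤ p := min_le_left _ _
        _ ≤ 1 - (1/2 + r^j/2) := by rw [hpr]; rw [hmax] at h2; linarith
    · calc thetaLo p ≤ 2*p*(1-p) := min_le_right _ _
        _ ≤ 1 - (1/2 + r^j/2) := by rw [hth]; rw [hmax] at h2; linarith
  · -- 1 - s p j ≤ thetaHi
    rw [hsj]
    rcases min_cases r 0 with ⟨hmin, _⟩ | ⟨hmin, _⟩
    · calc 1 - (1/2 + r^j/2) ≤ p := by rw [hpr]; rw [hmin] at h1; linarith
        _ ≤ thetaHi p := le_max_left _ _
    · calc 1 - (1/2 + r^j/2) ≤ 1/2 := by rw [hmin] at h1; linarith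
        _ ≤ thetaHi p := le_max_right _ _
  · rw [hsj]
    have := neg_abs_le (r^j)
    linarith [habs, abs_lt.1 hr]
  · rw [hsj]
    have := le_abs_self (r^j)
    linarith [habs, abs_lt.1 hr]

/-! ### Combinatorics of bit strings -/

lemma ones_le {n : ℕ} (x : Fin n → Bool) : ones x ≤ n := by
  unfold ones
  simpa using Finset.card_filter_le Finset.univ (fun i => x i = true)

lemma hamming_le {n : ℕ} (x y : Fin n → Bool) : hamming x y ≤ n := by
  unfold hamming
  simpa using Finset.card_filter_le Finset.univ (fun i => x i ≠ y i)

lemma ones_allOnes (n : ℕ) : ones (allOnes n) = n := by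
  simp [ones, allOnes]

lemma eq_allOnes_of_ones {n : ℕ} {x : Fin n → Bool} (h : ones x = n) : x = allOnes n := by
  have hcard : (Finset.univ.filter fun i => x i = true).card = Fintype.card (Fin n) := by
    simpa [ones] using h
  have huniv := Finset.eq_univ_of_card _ hcard
  funext i
  have : i ∈ Finset.univ.filter fun i => x i = true := by
    rw [huniv]; exact Finset.mem_univ i
  simpa [allOnes] using (Finset.mem_filter.1 this).2

lemma hamming_allOnes {n : ℕ} (x : Fin n → Bool) : hamming x (allOnes n) = n - ones x := by
  have h : ((Finset.univ : Finset (Fin n)).filter (fun i => x i = true)).card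
      + ((Finset.univ : Finset (Fin n)).filter (fun i => ¬ x i = true)).card = n := by
    rw [Finset.card_filter_add_card_filter_not]
    simp
  have h2 : (Finset.univ.filter fun i => ¬ x i = true).card = hamming x (allOnes n) := by
    unfold hamming allOnes
    congr 1
  unfold ones
  omega

lemma card_ones {n k : ℕ} :
    (Finset.univ.filter fun x : Fin n → Bool => ones x = k).card = n.choose k := by
  have h := Finset.card_powersetCard k (Finset.univ : Finset (Fin n))
  rw [Finset.card_univ, Fintype.card_fin] at h
  rw [← h]
  apply Finset.card_bij (fun x _ => Finset.univ.filter fun i => x i = true)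
  · intro x hx
    rw [Finset.mem_powersetCard]
    exact ⟨Finset.subset_univ _, by simpa [ones] using (Finset.mem_filter.1 hx).2⟩
  · intro x hx x' hx' hEq
    funext i
    have := Finset.ext_iff.1 hEq i
    simp only [Finset.mem_filter, Finset.mem_univ, true_and] at this
    cases hxi : x i <;> cases hxi' : x' i <;> simp_all
  · intro s hs
    rw [Finset.mem_powersetCard] at hs
    refine ⟨fun i => decide (i ∈ s), ?_, ?_⟩
    · have : (Finset.univ.filter fun i : Fin n => decide (i ∈ s) = true) = s := by
        ext i; simp
      rw [Finset.mem_filter]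
      exact ⟨Finset.mem_univ _, by unfold ones; rw [this]; exact hs.2⟩
    · ext i; simp

/-! ### flipProb facts -/

lemma flipProb_eq_prod {n : ℕ} (q : ℝ) (x y : Fin n → Bool) :
    flipProb q x y = ∏ i, (if x i ≠ y i then q else 1 - q) := by
  unfold flipProb
  rw [Finset.prod_ite (fun _ => q) (fun _ => 1 - q), Finset.prod_const, Finset.prod_const]
  have h1 : (Finset.univ.filter fun i => x i ≠ y i).card = hamming x y := rfl
  have h2 : (Finset.univ.filter fun i => ¬ x i ≠ y i).card = n - hamming x y := by
    have h : ((Finset.univ : Finset (Fin n)).filter (fun i => x i ≠ y i)).card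
        + ((Finset.univ : Finset (Fin n)).filter (fun i => ¬ x i ≠ y i)).card = n := by
      rw [Finset.card_filter_add_card_filter_not]
      simp
    unfold hamming
    omega
  rw [h1, h2]

lemma flipProb_sum {n : ℕ} {q : ℝ} (x : Fin n → Bool) :
    ∑ y : Fin n → Bool, flipProb q x y = 1 := by
  have key : ∑ g ∈ Fintype.piFinset (fun _ : Fin n => (Finset.univ : Finset Bool)),
      ∏ i, (if x i ≠ g i then q else 1 - q)
      = ∏ i : Fin n, ∑ b ∈ (Finset.univ : Finset Bool), (if x i ≠ b then q else 1 - q) :=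
    (Finset.prod_univ_sum _ (fun i b => if x i ≠ b then q else 1 - q)).symm
  have hone : ∀ i : Fin n, (∑ b ∈ (Finset.univ : Finset Bool), (if x i ≠ b then q else 1 - q)) = 1 := by
    intro i
    cases hxi : x i <;> simp [hxi] <;> try ring
  calc ∑ y : Fin n → Bool, flipProb q x y
      = ∑ y : Fin n → Bool, ∏ i, (if x i ≠ y i then q else 1 - q) :=
        Finset.sum_congr rfl (fun y _ => flipProb_eq_prod q x y)
    _ = ∑ g ∈ Fintype.piFinset (fun _ : Fin n => (Finset.univ : Finset Bool)),
          ∏ i, (if x i ≠ g i then q else 1 - q) := by rw [Fintype.piFinset_univ]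
    _ = ∏ i : Fin n, ∑ b ∈ (Finset.univ : Finset Bool), (if x i ≠ b then q else 1 - q) := key
    _ = 1 := by rw [Finset.prod_congr rfl (fun i _ => hone i)]; simp

lemma flipProb_nonneg {n : ℕ} {q : ℝ} (hq : q ∈ Set.Ioo (0:ℝ) 1) (x y : Fin n → Bool) :
    0 ≤ flipProb q x y := by
  obtain ⟨h0, h1⟩ := hq
  unfold flipProb
  have : (0:ℝ) ≤ 1 - q := by linarith
  positivity

lemma flipProb_le_max {n : ℕ} {q : ℝ} (hq : q ∈ Set.Ioo (0:ℝ) 1) (x y : Fin n → Bool) :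
    flipProb q x y ≤ (max q (1-q)) ^ n := by
  obtain ⟨h0, h1⟩ := hq
  unfold flipProb
  have hh := hamming_le x y
  calc q ^ hamming x y * (1-q) ^ (n - hamming x y)
      ≤ (max q (1-q)) ^ hamming x y * (max q (1-q)) ^ (n - hamming x y) := by
        apply mul_le_mul
        · exact pow_le_pow_left₀ h0.le (le_max_left _ _) _
        · exact pow_le_pow_left₀ (by linarith) (le_max_right _ _) _
        · exact pow_nonneg (by linarith) _
        · exact pow_nonneg (le_trans h0.le (le_max_left _ _)) _
    _ = (max q (1-q)) ^ n := by
        rw [← pow_add]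
        congr 1
        omega

lemma flipProb_allOnes_ge {n : ℕ} {q : ℝ} (hq : q ∈ Set.Ioo (0:ℝ) 1) (x : Fin n → Bool) :
    (min q (1-q)) ^ n ≤ flipProb q x (allOnes n) := by
  obtain ⟨h0, h1⟩ := hq
  unfold flipProb
  have hh := hamming_le x (allOnes n)
  have hmin0 : (0:ℝ) ≤ min q (1-q) := le_min h0.le (by linarith)
  calc (min q (1-q)) ^ n
      = (min q (1-q)) ^ hamming x (allOnes n) * (min q (1-q)) ^ (n - hamming x (allOnes n)) := by
        rw [← pow_add]; congr 1; omega
    _ ≤ q ^ hamming x (allOnes n) * (1-q) ^ (n - hamming x (allOnes n)) := by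
        apply mul_le_mul
        · exact pow_le_pow_left₀ hmin0 (min_le_left _ _) _
        · exact pow_le_pow_left₀ hmin0 (min_le_right _ _) _
        · exact pow_nonneg hmin0 _
        · exact pow_nonneg h0.le _

lemma flipProb_eq_exp {n : ℕ} {q : ℝ} (hq : q ∈ Set.Ioo (0:ℝ) 1) (x y : Fin n → Bool) :
    flipProb q x y = Real.exp ((hamming x y : ℝ) * Real.log q
      + ((n : ℝ) - hamming x y) * Real.log (1 - q)) := by
  obtain ⟨h0, h1⟩ := hq
  have h1' : (0:ℝ) < 1 - q := by linarith
  have hh := hamming_le x y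
  have e1 : q ^ hamming x y = Real.exp (Real.log q * (hamming x y : ℝ)) := by
    rw [← Real.rpow_natCast q (hamming x y), Real.rpow_def_of_pos h0]
  have e2 : (1-q) ^ (n - hamming x y) = Real.exp (Real.log (1-q) * ((n:ℝ) - hamming x y)) := by
    rw [← Real.rpow_natCast (1-q) (n - hamming x y), Real.rpow_def_of_pos h1']
    congr 1
    push_cast [hh]
    ring
  unfold flipProb
  rw [e1, e2, ← Real.exp_add]
  congr 1
  ring

/-! ### Structure of the fitness function -/

lemma s_zero (p : ℝ) : s p 0 = 1 := rfl

lemma inStone_zero_iff {p : ℝ} {n : ℕ} (x : Fin n → Bool) :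
    inStone p 0 x ↔ x = allOnes n := by
  unfold inStone
  rw [s_zero, mul_one, Int.floor_natCast]
  constructor
  · intro h
    exact eq_allOnes_of_ones (by exact_mod_cast h)
  · intro h
    subst h
    rw [ones_allOnes]

lemma dss_allOnes (p : ℝ) (n : ℕ) : dss p n (allOnes n) = (NN p n : ℝ) + 1 := by
  unfold dss
  have hbranch : ∃ k ≤ NN p n, inStone p k (allOnes n) :=
    ⟨0, Nat.zero_le _, (inStone_zero_iff _).2 rfl⟩
  rw [if_pos hbranch]
  have hinf : sInf {k : ℕ | k ≤ NN p n ∧ inStone p k (allOnes n)} = 0 :=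
    Nat.sInf_eq_zero.2 (Or.inl ⟨Nat.zero_le _, (inStone_zero_iff _).2 rfl⟩)
  rw [hinf]
  push_cast
  ring

lemma dss_le (p : ℝ) (n : ℕ) (x : Fin n → Bool) : dss p n x ≤ (NN p n : ℝ) + 1 := by
  unfold dss
  split
  · have h : (NN p n + 1 - sInf {k : ℕ | k ≤ NN p n ∧ inStone p k x} : ℕ) ≤ NN p n + 1 :=
      Nat.sub_le _ _
    calc ((NN p n + 1 - sInf {k : ℕ | k ≤ NN p n ∧ inStone p k x} : ℕ) : ℝ)
        ≤ ((NN p n + 1 : ℕ) : ℝ) := by exact_mod_cast h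
      _ = (NN p n : ℝ) + 1 := by push_cast; ring
  · positivity

lemma dss_nonneg (p : ℝ) (n : ℕ) (x : Fin n → Bool) : 0 ≤ dss p n x := by
  unfold dss
  split
  · exact Nat.cast_nonneg _
  · exact le_refl 0

lemma dss_stone_ge_one {p : ℝ} {n : ℕ} {x : Fin n → Bool} (hx : x ∈ stones p n) :
    1 ≤ dss p n x := by
  obtain ⟨j, hj1, hjN, hjx⟩ := hx
  have hbranch : ∃ k ≤ NN p n, inStone p k x := ⟨j, hjN, hjx⟩
  have hne : {k : ℕ | k ≤ NN p n ∧ inStone p k x}.Nonempty := ⟨j, hjN, hjx⟩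
  unfold dss
  rw [if_pos hbranch]
  have hmem := Nat.sInf_mem hne
  have h1 : sInf {k : ℕ | k ≤ NN p n ∧ inStone p k x} ≤ NN p n := hmem.1
  have h2 : 1 ≤ (NN p n + 1 - sInf {k : ℕ | k ≤ NN p n ∧ inStone p k x} : ℕ) := by omega
  exact_mod_cast h2

lemma dss_pos_cases {p : ℝ} {n : ℕ} {y : Fin n → Bool} (hy : 0 < dss p n y) :
    y = allOnes n ∨ y ∈ stones p n := by
  unfold dss at hy
  by_cases hbranch : ∃ k ≤ NN p n, inStone p k y
  · obtain ⟨j, hjN, hjy⟩ := hbranch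
    have hne : {k : ℕ | k ≤ NN p n ∧ inStone p k y}.Nonempty := ⟨j, hjN, hjy⟩
    have hmem := Nat.sInf_mem hne
    rcases Nat.eq_zero_or_pos (sInf {k : ℕ | k ≤ NN p n ∧ inStone p k y}) with h0 | h1
    · left
      exact (inStone_zero_iff _).1 (h0 ▸ hmem.2)
    · right
      exact ⟨_, h1, hmem.1, hmem.2⟩
  · rw [if_neg hbranch] at hy
    exact absurd hy (lt_irrefl 0)

lemma allOnes_not_stone {p : ℝ} {n : ℕ} (hp : p ∈ Set.Ioo (0:ℝ) 1) (hn : 1 ≤ n) :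
    allOnes n ∉ stones p n := by
  rintro ⟨j, hj1, hjN, hst⟩
  unfold inStone at hst
  rw [ones_allOnes] at hst
  have hnR : (0:ℝ) < n := by exact_mod_cast hn
  have hs := one_sub_s_bounds hp hj1
  have h1 : ((n:ℤ) : ℝ) ≤ (n:ℝ) * s p j := by
    rw [hst]
    exact Int.floor_le _
  have h2 : (n:ℝ) * s p j < n * 1 := mul_lt_mul_of_pos_left hs.2.2.2 hnR
  push_cast at h1
  linarith

lemma stone_ne_allOnes {p : ℝ} {n : ℕ} (hp : p ∈ Set.Ioo (0:ℝ) 1) (hn : 1 ≤ n)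
    {x : Fin n → Bool} (hx : x ∈ stones p n) : x ≠ allOnes n := by
  intro h
  exact allOnes_not_stone hp hn (h ▸ hx)

lemma maxSet_eq {p : ℝ} {n : ℕ} (hp : p ∈ Set.Ioo (0:ℝ) 1) (hn : 1 ≤ n) :
    maxSet (dss p n) = {allOnes n} := by
  ext y
  constructor
  · intro hy
    have h1 : dss p n (allOnes n) ≤ dss p n y := hy (allOnes n)
    rw [dss_allOnes] at h1
    have h2 := dss_le p n y
    have h3 : dss p n y = (NN p n : ℝ) + 1 := le_antisymm h2 h1
    unfold dss at h3
    by_cases hbranch : ∃ k ≤ NN p n, inStone p k y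
    · rw [if_pos hbranch] at h3
      obtain ⟨j, hjN, hjy⟩ := hbranch
      have hne : {k : ℕ | k ≤ NN p n ∧ inStone p k y}.Nonempty := ⟨j, hjN, hjy⟩
      have hmem := Nat.sInf_mem hne
      have h4 : (NN p n + 1 - sInf {k : ℕ | k ≤ NN p n ∧ inStone p k y} : ℕ) = NN p n + 1 := by
        have : ((NN p n + 1 - sInf {k : ℕ | k ≤ NN p n ∧ inStone p k y} : ℕ) : ℝ)
            = ((NN p n + 1 : ℕ) : ℝ) := by rw [h3]; push_cast; ring
        exact_mod_cast this
      have h5 : sInf {k : ℕ | k ≤ NN p n ∧ inStone p k y} = 0 := by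
        have := hmem.1
        omega
      have h6 : inStone p 0 y := h5 ▸ hmem.2
      exact (inStone_zero_iff _).1 h6
    · rw [if_neg hbranch] at h3
      have : (0:ℝ) < (NN p n : ℝ) + 1 := by positivity
      linarith
  · intro hy
    rw [Set.mem_singleton_iff] at hy
    subst hy
    intro z
    rw [dss_allOnes]
    exact dss_le p n z

lemma dss_notstone_le_zero {p : ℝ} {n : ℕ} {y : Fin n → Bool}
    (h1 : y ∉ stones p n) (h2 : y ≠ allOnes n) : dss p n y ≤ 0 := by
  by_contra h
  push_neg at h
  rcases dss_pos_cases h with h3 | h3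
  · exact h2 h3
  · exact h1 h3

/-! ### Chain mass lemmas -/

lemma eaStep_nonneg {n : ℕ} {q : ℝ} (hq : q ∈ Set.Ioo (0:ℝ) 1)
    (f : (Fin n → Bool) → ℝ) (x y : Fin n → Bool) : 0 ≤ eaStep f q x y := by
  unfold eaStep
  apply add_nonneg
  · split
    · exact flipProb_nonneg hq x y
    · exact le_refl 0
  · split
    · apply Finset.sum_nonneg
      intro z _
      split
      · exact flipProb_nonneg hq x z
      · exact le_refl 0
    · exact le_refl 0

lemma eaStep_rowsum {n : ℕ} {q : ℝ} (f : (Fin n → Bool) → ℝ) (x : Fin n → Bool) :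
    ∑ y : Fin n → Bool, eaStep f q x y = 1 := by
  unfold eaStep
  rw [Finset.sum_add_distrib]
  have h2 : (∑ y : Fin n → Bool, if y = x
      then ∑ z : Fin n → Bool, if f z < f x then flipProb q x z else 0 else 0)
      = ∑ z : Fin n → Bool, if f z < f x then flipProb q x z else 0 := by
    rw [Finset.sum_ite_eq' Finset.univ x
      (fun _ => ∑ z : Fin n → Bool, if f z < f x then flipProb q x z else 0)]
    simp
  rw [h2]
  have h3 : (∑ y : Fin n → Bool, if f x ≤ f y then flipProb q x y else 0)
      + (∑ z : Fin n → Bool, if f z < f x then flipProb q x z else 0)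
      = ∑ y : Fin n → Bool, flipProb q x y := by
    rw [← Finset.sum_add_distrib]
    apply Finset.sum_congr rfl
    intro y _
    by_cases h : f x ≤ f y
    · rw [if_pos h, if_neg (not_lt.2 h), add_zero]
    · rw [if_neg h, if_pos (not_le.1 h), zero_add]
  rw [h3, flipProb_sum]

lemma eaKilled_nonneg {n : ℕ} {q : ℝ} (hq : q ∈ Set.Ioo (0:ℝ) 1)
    (f : (Fin n → Bool) → ℝ) (A : Set (Fin n → Bool)) (μ0 : (Fin n → Bool) → ℝ)
    (hμ0 : ∀ y, 0 ≤ μ0 y) : ∀ t y, 0 ≤ eaKilled f q A μ0 t y := by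
  intro t
  induction t with
  | zero =>
      intro y
      show (0:ℝ) ≤ if y ∈ A then 0 else μ0 y
      split
      · exact le_refl 0
      · exact hμ0 y
  | succ t ih =>
      intro y
      show (0:ℝ) ≤ if y ∈ A then 0
        else ∑ x : Fin n → Bool, eaKilled f q A μ0 t x * eaStep f q x y
      split
      · exact le_refl 0
      · exact Finset.sum_nonneg fun x _ => mul_nonneg (ih x) (eaStep_nonneg hq f x y)

lemma sum_ite_notmem_singleton {n : ℕ} (S : Fin n → Bool) (g : (Fin n → Bool) → ℝ) :
    (∑ y : Fin n → Bool, if y ∈ ({S} : Set (Fin n → Bool)) then 0 else g y)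
      = ∑ y ∈ Finset.univ.erase S, g y := by
  have hcong : ∀ y ∈ Finset.univ.erase S,
      (if y ∈ ({S} : Set (Fin n → Bool)) then (0:ℝ) else g y) = g y := by
    intro y hy
    exact if_neg (by simpa using (Finset.mem_erase.1 hy).1)
  calc (∑ y : Fin n → Bool, if y ∈ ({S} : Set (Fin n → Bool)) then 0 else g y)
      = (∑ y ∈ Finset.univ.erase S, if y ∈ ({S} : Set (Fin n → Bool)) then 0 else g y)
        + (if S ∈ ({S} : Set (Fin n → Bool)) then 0 else g S) :=
        (Finset.sum_erase_add _ _ (Finset.mem_univ S)).symm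
    _ = ∑ y ∈ Finset.univ.erase S, g y := by
        rw [Finset.sum_congr rfl hcong, if_pos (Set.mem_singleton S)]
        ring

lemma mass_le {p q : ℝ} {n : ℕ} (hq : q ∈ Set.Ioo (0:ℝ) 1) :
    ∀ t, ∑ y : Fin n → Bool, eaKilled (dss p n) q ({allOnes n} : Set (Fin n → Bool))
      (uniform n) t y ≤ (1 - (min q (1-q))^n)^t := by
  obtain ⟨hq0, hq1⟩ := hq
  have hδ0 : (0:ℝ) < (min q (1-q))^n := pow_pos (lt_min hq0 (by linarith)) n
  have hδ1 : (min q (1-q))^n ≤ 1 :=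
    pow_le_one₀ (le_min hq0.le (by linarith)) (min_le_left q (1-q) |>.trans hq1.le)
  intro t
  induction t with
  | zero =>
      have : ∀ y : Fin n → Bool,
          (if y ∈ ({allOnes n} : Set (Fin n → Bool)) then (0:ℝ) else uniform n y)
            ≤ uniform n y := by
        intro y
        split
        · unfold uniform; positivity
        · exact le_refl _
      calc ∑ y : Fin n → Bool, eaKilled (dss p n) q ({allOnes n} : Set (Fin n → Bool)) (uniform n) 0 y
          = ∑ y : Fin n → Bool, (if y ∈ ({allOnes n} : Set (Fin n → Bool)) then (0:ℝ) else uniform n y) := by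
            simp only [eaKilled]
            exact Finset.sum_congr rfl fun y _ => by split_ifs <;> rfl
        _ ≤ ∑ y : Fin n → Bool, uniform n y := Finset.sum_le_sum (fun y _ => this y)
        _ = 1 := by
            unfold uniform
            rw [Finset.sum_const, Finset.card_univ]
            simp
        _ = (1 - (min q (1-q))^n)^0 := by norm_num
  | succ t ih =>
      have step_ge : ∀ x : Fin n → Bool,
          (min q (1-q))^n ≤ eaStep (dss p n) q x (allOnes n) := by
        intro x
        unfold eaStep
        have hfx : dss p n x ≤ dss p n (allOnes n) := by
          rw [dss_allOnes]; exact dss_le p n x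
        rw [if_pos hfx]
        have h2 : (0:ℝ) ≤ if allOnes n = x
            then ∑ z : Fin n → Bool, if dss p n z < dss p n x then flipProb q x z else 0
            else 0 := by
          split
          · exact Finset.sum_nonneg fun z _ => by
              split
              · exact flipProb_nonneg ⟨hq0, hq1⟩ x z
              · exact le_refl 0
          · exact le_refl 0
        linarith [flipProb_allOnes_ge ⟨hq0, hq1⟩ x]
      have hunfold : ∑ y : Fin n → Bool,
          eaKilled (dss p n) q ({allOnes n} : Set (Fin n → Bool)) (uniform n) (t+1) y
          = ∑ y : Fin n → Bool, (if y ∈ ({allOnes n} : Set (Fin n → Bool)) then 0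
            else ∑ x : Fin n → Bool,
              eaKilled (dss p n) q ({allOnes n} : Set (Fin n → Bool)) (uniform n) t x
                * eaStep (dss p n) q x y) := by
        simp only [eaKilled]
        exact Finset.sum_congr rfl fun y _ => by split_ifs <;> rfl
      rw [hunfold, sum_ite_notmem_singleton]
      have hswap : (∑ y ∈ Finset.univ.erase (allOnes n), ∑ x : Fin n → Bool,
          eaKilled (dss p n) q ({allOnes n} : Set (Fin n → Bool)) (uniform n) t x
            * eaStep (dss p n) q x y)
          = ∑ x : Fin n → Bool, eaKilled (dss p n) q ({allOnes n} : Set (Fin n → Bool))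
              (uniform n) t x * ∑ y ∈ Finset.univ.erase (allOnes n), eaStep (dss p n) q x y := by
        rw [Finset.sum_comm]
        exact Finset.sum_congr rfl fun x _ => (Finset.mul_sum _ _ _).symm
      rw [hswap]
      have hrow : ∀ x : Fin n → Bool,
          ∑ y ∈ Finset.univ.erase (allOnes n), eaStep (dss p n) q x y
            ≤ 1 - (min q (1-q))^n := by
        intro x
        have := Finset.sum_erase_add Finset.univ (eaStep (dss p n) q x)
          (Finset.mem_univ (allOnes n))
        rw [eaStep_rowsum] at this
        linarith [step_ge x]
      calc ∑ x : Fin n → Bool, eaKilled (dss p n) q ({allOnes n} : Set (Fin n → Bool))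
              (uniform n) t x * ∑ y ∈ Finset.univ.erase (allOnes n), eaStep (dss p n) q x y
          ≤ ∑ x : Fin n → Bool, eaKilled (dss p n) q ({allOnes n} : Set (Fin n → Bool))
              (uniform n) t x * (1 - (min q (1-q))^n) := by
            apply Finset.sum_le_sum
            intro x _
            exact mul_le_mul_of_nonneg_left (hrow x)
              (eaKilled_nonneg ⟨hq0, hq1⟩ _ _ _ (fun y => by unfold uniform; positivity) t x)
        _ = (∑ x : Fin n → Bool, eaKilled (dss p n) q ({allOnes n} : Set (Fin n → Bool))
              (uniform n) t x) * (1 - (min q (1-q))^n) := by rw [← Finset.sum_mul]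
        _ ≤ (1 - (min q (1-q))^n)^t * (1 - (min q (1-q))^n) := by
            apply mul_le_mul_of_nonneg_right ih
            linarith
        _ = (1 - (min q (1-q))^n)^(t+1) := by ring

/-! ### Mass trapped in the stones -/

lemma stepsum_stone {p q : ℝ} {n : ℕ} (hp : p ∈ Set.Ioo (0:ℝ) 1) (hq : q ∈ Set.Ioo (0:ℝ) 1)
    (hn : 1 ≤ n) {ε : ℝ} (hε0 : 0 ≤ ε)
    (hε : ∀ x ∈ stones p n, flipProb q x (allOnes n) ≤ ε)
    {x : Fin n → Bool} (hx : x ∈ stones p n) :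
    1 - ε ≤ ∑ y ∈ Finset.univ.filter (· ∈ stones p n), eaStep (dss p n) q x y := by
  have hsd := Finset.sum_sdiff (f := eaStep (dss p n) q x)
    (Finset.filter_subset (· ∈ stones p n) Finset.univ)
  rw [eaStep_rowsum] at hsd
  have hterm : ∀ y ∈ Finset.univ \ Finset.univ.filter (· ∈ stones p n),
      eaStep (dss p n) q x y ≤ (if y = allOnes n then ε else 0) := by
    intro y hy
    have hyB : y ∉ stones p n := by
      have := (Finset.mem_sdiff.1 hy).2
      simpa using this
    by_cases hyS : y = allOnes n
    · subst hyS
      rw [if_pos rfl]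
      unfold eaStep
      have hx_ne : ¬ (allOnes n = x) := fun h => (stone_ne_allOnes hp hn hx) h.symm
      rw [if_neg hx_ne, add_zero]
      split
      · exact hε x hx
      · exact hε0
    · rw [if_neg hyS]
      unfold eaStep
      have h1 : ¬ (dss p n x ≤ dss p n y) := by
        have ha := dss_notstone_le_zero hyB hyS
        have hb := dss_stone_ge_one hx
        linarith
      have h2 : ¬ (y = x) := fun h => hyB (h ▸ hx)
      rw [if_neg h1, if_neg h2]
      norm_num
  have hsum1 : ∑ y ∈ Finset.univ \ Finset.univ.filter (· ∈ stones p n),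
      eaStep (dss p n) q x y ≤ ε := by
    calc ∑ y ∈ Finset.univ \ Finset.univ.filter (· ∈ stones p n), eaStep (dss p n) q x y
        ≤ ∑ y ∈ Finset.univ \ Finset.univ.filter (· ∈ stones p n),
            (if y = allOnes n then ε else 0) := Finset.sum_le_sum hterm
      _ = ε := by
          rw [Finset.sum_ite_eq' (Finset.univ \ Finset.univ.filter (· ∈ stones p n))
            (allOnes n) (fun _ => ε)]
          rw [if_pos]
          rw [Finset.mem_sdiff]
          exact ⟨Finset.mem_univ _, by simp [allOnes_not_stone hp hn]⟩
  linarith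

lemma killed_zero_stone {p q : ℝ} {n : ℕ} (hp : p ∈ Set.Ioo (0:ℝ) 1) (hn : 1 ≤ n)
    {y : Fin n → Bool} (hy : y ∈ stones p n) :
    eaKilled (dss p n) q ({allOnes n} : Set (Fin n → Bool)) (uniform n) 0 y = uniform n y := by
  have hne : y ∉ ({allOnes n} : Set (Fin n → Bool)) := by
    simpa using stone_ne_allOnes hp hn hy
  simp only [eaKilled]
  rw [if_neg hne]

lemma killed_succ_stone {p q : ℝ} {n : ℕ} (hp : p ∈ Set.Ioo (0:ℝ) 1) (hn : 1 ≤ n)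
    {y : Fin n → Bool} (hy : y ∈ stones p n) (t : ℕ) :
    eaKilled (dss p n) q ({allOnes n} : Set (Fin n → Bool)) (uniform n) (t+1) y
      = ∑ x : Fin n → Bool,
          eaKilled (dss p n) q ({allOnes n} : Set (Fin n → Bool)) (uniform n) t x
            * eaStep (dss p n) q x y := by
  have hne : y ∉ ({allOnes n} : Set (Fin n → Bool)) := by
    simpa using stone_ne_allOnes hp hn hy
  simp only [eaKilled]
  rw [if_neg hne]

lemma W_zero_ge {p q : ℝ} {n : ℕ} (hp : p ∈ Set.Ioo (0:ℝ) 1) (hn : 1 ≤ n) :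
    1/((n:ℝ)+1) ≤ ∑ y ∈ Finset.univ.filter (· ∈ stones p n),
      eaKilled (dss p n) q ({allOnes n} : Set (Fin n → Bool)) (uniform n) 0 y := by
  obtain ⟨hN1, hN2⟩ := NN_spec hp hn
  have hmid : (Finset.univ.filter fun x : Fin n → Bool => ones x = n/2)
      ⊆ Finset.univ.filter (· ∈ stones p n) := by
    intro x hx
    rw [Finset.mem_filter] at hx ⊢
    refine ⟨Finset.mem_univ _, ⟨NN p n, hN1, le_rfl, ?_⟩⟩
    unfold inStone
    rw [hN2, floor_half0]
    exact_mod_cast hx.2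
  have hcard : n.choose (n/2) ≤ (Finset.univ.filter (· ∈ stones p n)).card := by
    calc n.choose (n/2) = (Finset.univ.filter fun x : Fin n → Bool => ones x = n/2).card :=
          card_ones.symm
      _ ≤ _ := Finset.card_le_card hmid
  have hchoose : 2^n ≤ (n+1) * n.choose (n/2) := by
    calc 2^n = ∑ i ∈ Finset.range (n+1), n.choose i := (Nat.sum_range_choose n).symm
      _ ≤ ∑ _i ∈ Finset.range (n+1), n.choose (n/2) :=
          Finset.sum_le_sum (fun i _ => Nat.choose_le_middle i n)
      _ = (n+1) * n.choose (n/2) := by rw [Finset.sum_const, Finset.card_range, smul_eq_mul]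
  have hW0 : ∑ y ∈ Finset.univ.filter (· ∈ stones p n),
      eaKilled (dss p n) q ({allOnes n} : Set (Fin n → Bool)) (uniform n) 0 y
      = ((Finset.univ.filter (· ∈ stones p n)).card : ℝ) * (1/2^n) := by
    rw [Finset.sum_congr rfl (fun y hy => killed_zero_stone hp hn
      (by simpa using (Finset.mem_filter.1 hy).2))]
    unfold uniform
    rw [Finset.sum_const, nsmul_eq_mul]
  rw [hW0]
  have h2n : (0:ℝ) < 2^n := by positivity
  have hn1 : (0:ℝ) < (n:ℝ) + 1 := by positivity
  rw [div_le_iff₀ hn1]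
  have key : (2:ℝ)^n ≤ ((Finset.univ.filter (· ∈ stones p n)).card : ℝ) * ((n:ℝ)+1) := by
    have : ((2^n : ℕ) : ℝ) ≤ (((n+1) * (Finset.univ.filter (· ∈ stones p n)).card : ℕ) : ℝ) := by
      exact_mod_cast le_trans hchoose (Nat.mul_le_mul_left _ hcard)
    push_cast at this
    linarith
  calc (1:ℝ) = 2^n * (1/2^n) := by field_simp
    _ ≤ (((Finset.univ.filter (· ∈ stones p n)).card : ℝ) * ((n:ℝ)+1)) * (1/2^n) := by
        apply mul_le_mul_of_nonneg_right key
        positivity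
    _ = ((Finset.univ.filter (· ∈ stones p n)).card : ℝ) * (1/2^n) * ((n:ℝ)+1) := by ring

lemma W_geom {p q : ℝ} {n : ℕ} (hp : p ∈ Set.Ioo (0:ℝ) 1) (hq : q ∈ Set.Ioo (0:ℝ) 1)
    (hn : 1 ≤ n) {ε : ℝ} (hε0 : 0 ≤ ε) (hε1 : ε ≤ 1)
    (hε : ∀ x ∈ stones p n, flipProb q x (allOnes n) ≤ ε) :
    ∀ t, (1-ε)^t * (∑ y ∈ Finset.univ.filter (· ∈ stones p n),
        eaKilled (dss p n) q ({allOnes n} : Set (Fin n → Bool)) (uniform n) 0 y)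
      ≤ ∑ y ∈ Finset.univ.filter (· ∈ stones p n),
          eaKilled (dss p n) q ({allOnes n} : Set (Fin n → Bool)) (uniform n) t y := by
  have hk0 : ∀ t y, 0 ≤ eaKilled (dss p n) q ({allOnes n} : Set (Fin n → Bool)) (uniform n) t y :=
    eaKilled_nonneg hq _ _ _ (fun y => by unfold uniform; positivity)
  intro t
  induction t with
  | zero => simp
  | succ t ih =>
      have hstep : (1-ε) * (∑ y ∈ Finset.univ.filter (· ∈ stones p n),
          eaKilled (dss p n) q ({allOnes n} : Set (Fin n → Bool)) (uniform n) t y)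
          ≤ ∑ y ∈ Finset.univ.filter (· ∈ stones p n),
              eaKilled (dss p n) q ({allOnes n} : Set (Fin n → Bool)) (uniform n) (t+1) y := by
        have h1 : ∑ y ∈ Finset.univ.filter (· ∈ stones p n),
            eaKilled (dss p n) q ({allOnes n} : Set (Fin n → Bool)) (uniform n) (t+1) y
            = ∑ y ∈ Finset.univ.filter (· ∈ stones p n), ∑ x : Fin n → Bool,
                eaKilled (dss p n) q ({allOnes n} : Set (Fin n → Bool)) (uniform n) t x
                  * eaStep (dss p n) q x y :=
          Finset.sum_congr rfl (fun y hy => killed_succ_stone hp hn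
            (by simpa using (Finset.mem_filter.1 hy).2) t)
        rw [h1]
        have h2 : ∑ y ∈ Finset.univ.filter (· ∈ stones p n),
            ∑ x ∈ Finset.univ.filter (· ∈ stones p n),
              eaKilled (dss p n) q ({allOnes n} : Set (Fin n → Bool)) (uniform n) t x
                * eaStep (dss p n) q x y
            ≤ ∑ y ∈ Finset.univ.filter (· ∈ stones p n), ∑ x : Fin n → Bool,
                eaKilled (dss p n) q ({allOnes n} : Set (Fin n → Bool)) (uniform n) t x
                  * eaStep (dss p n) q x y := by
          apply Finset.sum_le_sum
          intro y _
          apply Finset.sum_le_sum_of_subset_of_nonneg (Finset.filter_subset _ _)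
          intro x _ _
          exact mul_nonneg (hk0 t x) (eaStep_nonneg hq _ x y)
        refine le_trans ?_ h2
        rw [Finset.sum_comm]
        have h3 : ∀ x ∈ Finset.univ.filter (· ∈ stones p n),
            eaKilled (dss p n) q ({allOnes n} : Set (Fin n → Bool)) (uniform n) t x * (1-ε)
            ≤ ∑ y ∈ Finset.univ.filter (· ∈ stones p n),
                eaKilled (dss p n) q ({allOnes n} : Set (Fin n → Bool)) (uniform n) t x
                  * eaStep (dss p n) q x y := by
          intro x hx
          rw [← Finset.mul_sum]
          exact mul_le_mul_of_nonneg_left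
            (stepsum_stone hp hq hn hε0 hε (by simpa using (Finset.mem_filter.1 hx).2))
            (hk0 t x)
        calc (1-ε) * ∑ y ∈ Finset.univ.filter (· ∈ stones p n),
              eaKilled (dss p n) q ({allOnes n} : Set (Fin n → Bool)) (uniform n) t y
            = ∑ x ∈ Finset.univ.filter (· ∈ stones p n),
                eaKilled (dss p n) q ({allOnes n} : Set (Fin n → Bool)) (uniform n) t x * (1-ε) := by
              rw [← Finset.sum_mul]; ring
          _ ≤ _ := Finset.sum_le_sum h3
      calc (1-ε)^(t+1) * ∑ y ∈ Finset.univ.filter (· ∈ stones p n),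
            eaKilled (dss p n) q ({allOnes n} : Set (Fin n → Bool)) (uniform n) 0 y
          = (1-ε) * ((1-ε)^t * ∑ y ∈ Finset.univ.filter (· ∈ stones p n),
              eaKilled (dss p n) q ({allOnes n} : Set (Fin n → Bool)) (uniform n) 0 y) := by ring
        _ ≤ (1-ε) * ∑ y ∈ Finset.univ.filter (· ∈ stones p n),
              eaKilled (dss p n) q ({allOnes n} : Set (Fin n → Bool)) (uniform n) t y :=
            mul_le_mul_of_nonneg_left ih (by linarith)
        _ ≤ _ := hstep

/-! ### Exponential bound on the escape probability, and the main theorem -/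

lemma flip_bound_stone {p q : ℝ} {n : ℕ} (hp : p ∈ Set.Ioo (0:ℝ) 1) (hq : q ∈ Set.Ioo (0:ℝ) 1)
    (hn : 1 ≤ n) {x : Fin n → Bool} (hx : x ∈ stones p n) :
    flipProb q x (allOnes n)
      ≤ Real.exp (|(-Real.log q) - (-Real.log (1-q))| - (n:ℝ) * mExp p q) := by
  obtain ⟨j, hj1, hjN, hjx⟩ := hx
  have hsb := one_sub_s_bounds hp hj1
  have hol := ones_le x
  have h1 : ((ones x : ℕ):ℝ) ≤ (n:ℝ) * s p j := by
    have hf := Int.floor_le ((n:ℝ) * s p j)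
    rw [← hjx] at hf
    exact_mod_cast hf
  have h2 : (n:ℝ) * s p j < ((ones x : ℕ):ℝ) + 1 := by
    have hf := Int.lt_floor_add_one ((n:ℝ) * s p j)
    rw [← hjx] at hf
    exact_mod_cast hf
  have hzr : ((hamming x (allOnes n) : ℕ):ℝ) = (n:ℝ) - ones x := by
    rw [hamming_allOnes]
    push_cast [hol]
    ring
  rw [flipProb_eq_exp hq]
  apply Real.exp_le_exp.2
  rw [hzr]
  set A := Real.log q with hA
  set B := Real.log (1-q) with hB
  -- u := n * s p j - ones x ∈ [0,1]
  have hu0 : (0:ℝ) ≤ (n:ℝ) * s p j - ones x := by linarith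
  have hu1 : (n:ℝ) * s p j - ones x ≤ 1 := by linarith
  have habs1 : -(|(-A) - (-B)|) ≤ ((n:ℝ) * s p j - ones x) * ((-A) - (-B)) := by
    nlinarith [mul_nonneg hu0 (show (0:ℝ) ≤ ((-A) - (-B)) + |(-A) - (-B)| by
        linarith [neg_abs_le ((-A) - (-B))]),
      mul_nonneg (show (0:ℝ) ≤ 1 - ((n:ℝ) * s p j - ones x) by linarith)
        (abs_nonneg ((-A) - (-B)))]
  have hphi : mExp p q ≤ phi q (1 - s p j) := phi_min hsb.1 hsb.2.1
  have hphin : (n:ℝ) * mExp p q ≤ (n:ℝ) * phi q (1 - s p j) :=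
    mul_le_mul_of_nonneg_left hphi (Nat.cast_nonneg n)
  have hphival : phi q (1 - s p j) = (1 - s p j) * (-A) + (s p j) * (-B) := by
    unfold phi
    rw [← hA, ← hB]
    ring
  -- algebra: ((n:ℝ) - ones x)*(-A) + (ones x)*(-B)
  --   = n * phi q (1 - s p j) + u * ((-A) - (-B))
  have halg : ((n:ℝ) - ones x) * (-A) + (ones x : ℝ) * (-B)
      = (n:ℝ) * phi q (1 - s p j) + ((n:ℝ) * s p j - ones x) * ((-A) - (-B)) := by
    rw [hphival]
    ring
  have hkey : (n:ℝ) * mExp p q - |(-A) - (-B)|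
      ≤ ((n:ℝ) - ones x) * (-A) + (ones x : ℝ) * (-B) := by
    rw [halg]
    linarith
  linarith [hkey]

theorem runtime_lower_bound_off_p' (p : ℝ) (hp : p ∈ Set.Ioo (0 : ℝ) 1)
    (q : ℝ) (hq : q ∈ Set.Ioo (0 : ℝ) 1) (hqp : q ≠ p) :
    ∃ η : ℝ, 1 / (p ^ p * (1 - p) ^ (1 - p)) < η ∧ ∃ c : ℝ, 0 < c ∧
      ∀ n : ℕ, 2 ≤ n → c * η ^ n ≤ expectedRuntime (dss p n) q := by
  have hp0 : 0 < p := hp.1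
  have hp1 : p < 1 := hp.2
  have hq0 : 0 < q := hq.1
  have hq1 : q < 1 := hq.2
  have hm : Hf p < mExp p q := Hf_lt_mExp hp hq hqp
  set m := mExp p q with hm_def
  set D := |(-Real.log q) - (-Real.log (1-q))| with hD_def
  set d := (m - Hf p)/2 with hd_def
  have hd : 0 < d := by rw [hd_def]; linarith
  refine ⟨Real.exp ((Hf p + m)/2), ?_, Real.exp (-D) * d^2/4, ?_, ?_⟩
  · have hα : 1 / (p ^ p * (1 - p) ^ (1 - p)) = Real.exp (Hf p) := by
      rw [Real.rpow_def_of_pos hp0, Real.rpow_def_of_pos (by linarith : (0:ℝ) < 1 - p)]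
      rw [← Real.exp_add, one_div, ← Real.exp_neg]
      congr 1
      unfold Hf
      ring
    rw [hα]
    exact Real.exp_lt_exp.2 (by linarith)
  · exact div_pos (mul_pos (Real.exp_pos _) (pow_pos hd 2)) (by norm_num)
  · intro n hn2
    have hn1 : 1 ≤ n := le_trans (by norm_num) hn2
    have hn2R : (2:ℝ) ≤ (n:ℝ) := by exact_mod_cast hn2
    have hnpos : (0:ℝ) < (n:ℝ) + 1 := by positivity
    set Mx := max q (1-q) with hMx_def
    have hMx0 : 0 < Mx := lt_of_lt_of_le hq0 (le_max_left _ _)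
    have hMx1 : Mx < 1 := max_lt hq1 (by linarith)
    set ε := min (Real.exp (D - (n:ℝ)*m)) (Mx^n) with hε_def
    have hε0 : 0 < ε := lt_min (Real.exp_pos _) (pow_pos hMx0 n)
    have hε1 : ε < 1 := lt_of_le_of_lt (min_le_right _ _) (pow_lt_one₀ hMx0.le hMx1 (by omega))
    have hflip : ∀ x ∈ stones p n, flipProb q x (allOnes n) ≤ ε := by
      intro x hx
      refine le_min ?_ (flipProb_le_max hq x _)
      exact flip_bound_stone hp hq hn1 hx
    -- identify the expected runtime
    have hE : expectedRuntime (dss p n) q = ∑' t, ∑ y : Fin n → Bool,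
        eaKilled (dss p n) q ({allOnes n} : Set (Fin n → Bool)) (uniform n) t y := by
      unfold expectedRuntime eaHitTime
      rw [maxSet_eq hp hn1]
    have hk0 : ∀ t (y : Fin n → Bool),
        0 ≤ eaKilled (dss p n) q ({allOnes n} : Set (Fin n → Bool)) (uniform n) t y :=
      eaKilled_nonneg hq _ _ _ (fun y => by unfold uniform; positivity)
    have hγ0 : ∀ t, 0 ≤ ∑ y : Fin n → Bool,
        eaKilled (dss p n) q ({allOnes n} : Set (Fin n → Bool)) (uniform n) t y :=
      fun t => Finset.sum_nonneg (fun y _ => hk0 t y)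
    have hδ0 : (0:ℝ) < (min q (1-q))^n := pow_pos (lt_min hq0 (by linarith)) n
    have hδ1 : (min q (1-q))^n ≤ 1 :=
      pow_le_one₀ (le_min hq0.le (by linarith)) ((min_le_left q (1-q)).trans hq1.le)
    have hsum : Summable (fun t => ∑ y : Fin n → Bool,
        eaKilled (dss p n) q ({allOnes n} : Set (Fin n → Bool)) (uniform n) t y) :=
      Summable.of_nonneg_of_le hγ0 (mass_le hq)
        (summable_geometric_of_lt_one (by linarith) (by linarith))
    have hlow : ∀ t, (1/((n:ℝ)+1)) * (1-ε)^t ≤ ∑ y : Fin n → Bool,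
        eaKilled (dss p n) q ({allOnes n} : Set (Fin n → Bool)) (uniform n) t y := by
      intro t
      calc (1/((n:ℝ)+1)) * (1-ε)^t = (1-ε)^t * (1/((n:ℝ)+1)) := by ring
        _ ≤ (1-ε)^t * ∑ y ∈ Finset.univ.filter (· ∈ stones p n),
              eaKilled (dss p n) q ({allOnes n} : Set (Fin n → Bool)) (uniform n) 0 y :=
            mul_le_mul_of_nonneg_left (W_zero_ge hp hn1) (pow_nonneg (by linarith) t)
        _ ≤ ∑ y ∈ Finset.univ.filter (· ∈ stones p n),
              eaKilled (dss p n) q ({allOnes n} : Set (Fin n → Bool)) (uniform n) t y :=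
            W_geom hp hq hn1 hε0.le hε1.le hflip t
        _ ≤ ∑ y : Fin n → Bool,
              eaKilled (dss p n) q ({allOnes n} : Set (Fin n → Bool)) (uniform n) t y :=
            Finset.sum_le_sum_of_subset_of_nonneg (Finset.filter_subset _ _)
              (fun y _ _ => hk0 t y)
    have hsumlow : Summable (fun t : ℕ => (1/((n:ℝ)+1)) * (1-ε)^t) :=
      (summable_geometric_of_lt_one (by linarith) (by linarith)).mul_left _
    have hEge : (1/((n:ℝ)+1)) * ε⁻¹ ≤ expectedRuntime (dss p n) q := by
      rw [hE]
      have hgeo : ∑' t : ℕ, (1/((n:ℝ)+1)) * (1-ε)^t = (1/((n:ℝ)+1)) * ε⁻¹ := by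
        rw [tsum_mul_left, tsum_geometric_of_lt_one (by linarith) (by linarith)]
        rw [show (1:ℝ) - (1-ε) = ε by ring]
      rw [← hgeo]
      exact Summable.tsum_le_tsum hlow hsumlow hsum
    have hεinv : Real.exp ((n:ℝ)*m - D) ≤ ε⁻¹ := by
      have h1 : ε ≤ Real.exp (D - (n:ℝ)*m) := min_le_left _ _
      have h2 := one_div_le_one_div_of_le hε0 h1
      rw [one_div, one_div, ← Real.exp_neg] at h2
      rw [show (n:ℝ)*m - D = -(D - (n:ℝ)*m) by ring]
      exact h2
    -- final numeric inequality
    have hX := Real.add_one_le_exp ((n:ℝ)*d/2)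
    have h1 : ((n:ℝ)*d/2)^2 ≤ Real.exp ((n:ℝ)*d) := by
      have hsq : Real.exp ((n:ℝ)*d) = Real.exp ((n:ℝ)*d/2) * Real.exp ((n:ℝ)*d/2) := by
        rw [← Real.exp_add]
        congr 1
        ring
      have h0 : (0:ℝ) ≤ (n:ℝ)*d/2 := by positivity
      nlinarith [hX]
    have h2 : ((n:ℝ)+1) * (d^2/4) ≤ ((n:ℝ)*d/2)^2 := by
      nlinarith [mul_nonneg (show (0:ℝ) ≤ (n:ℝ)^2 - (n:ℝ) - 1 by nlinarith) (sq_nonneg d)]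
    have hmain : ((n:ℝ)+1) * (d^2/4) ≤ Real.exp ((n:ℝ)*d) := le_trans h2 h1
    have hfactor : Real.exp ((n:ℝ)*m - D)
        = Real.exp ((n:ℝ)*d) * (Real.exp (-D) * Real.exp ((n:ℝ)*((Hf p + m)/2))) := by
      rw [← Real.exp_add, ← Real.exp_add]
      congr 1
      rw [hd_def]
      ring
    have hpow : (Real.exp ((Hf p + m)/2))^n = Real.exp ((n:ℝ)*((Hf p + m)/2)) :=
      (Real.exp_nat_mul _ n).symm
    calc (Real.exp (-D) * d^2/4) * (Real.exp ((Hf p + m)/2))^n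
        = (d^2/4) * (Real.exp (-D) * Real.exp ((n:ℝ)*((Hf p + m)/2))) := by
          rw [hpow]
          ring
      _ ≤ (Real.exp ((n:ℝ)*d) / ((n:ℝ)+1)) * (Real.exp (-D) * Real.exp ((n:ℝ)*((Hf p + m)/2))) := by
          apply mul_le_mul_of_nonneg_right
          · rw [le_div_iff₀ hnpos]
            calc d^2/4 * ((n:ℝ)+1) = ((n:ℝ)+1) * (d^2/4) := by ring
              _ ≤ Real.exp ((n:ℝ)*d) := hmain
          · positivity
      _ = (1/((n:ℝ)+1)) * Real.exp ((n:ℝ)*m - D) := by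
          rw [hfactor]
          ring
      _ ≤ (1/((n:ℝ)+1)) * ε⁻¹ := by
          apply mul_le_mul_of_nonneg_left hεinv
          positivity
      _ ≤ expectedRuntime (dss p n) q := hEge

/-- For fixed `p ∈ (0,1)`, `α = 1/(p^p (1-p)^(1-p))`, and every
`q ∈ (0,1)` with `q ≠ p`, there are `η > α` and `c > 0` with
`E[T(q)] ≥ c · η^n` for all `n ≥ 2`. -/
theorem runtime_lower_bound_off_p (p : ℝ) (hp : p ∈ Set.Ioo (0 : ℝ) 1)
    (q : ℝ) (hq : q ∈ Set.Ioo (0 : ℝ) 1) (hqp : q ≠ p) :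
    ∃ η : ℝ, 1 / (p ^ p * (1 - p) ^ (1 - p)) < η ∧ ∃ c : ℝ, 0 < c ∧
      ∀ n : ℕ, 2 ≤ n → c * η ^ n ≤ expectedRuntime (dss p n) q := by
  exact runtime_lower_bound_off_p' p hp q hq hqp

end DSS
end

section
/- Fix p ∈ (1/2, 1) and set β = (1−p)² + p². Let q ∈ (0,1), let n be such that the stepping stones of DistantSteppingStones_p are defined, let x ∈ S_k for some 1 ≤ k ≤ N, and let x' be obtained from x by flipping each bit independently with probability q. Then: if q ≥ 1/2, P(x' = 1^n) ≤ q^{⌈pn⌉} (1−q)^{⌊(1−p)n⌋}; and if q < 1/2, P(x' = 1^n) ≤ q^{⌈(1−β)n⌉} (1−q)^{⌊βn⌋}. -/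
open Finset
open scoped Classical

namespace DSS

private lemma key_ge (q : ℝ) (hq0 : 0 ≤ q) (hq1 : q ≤ 1) (hhalf : 1 - q ≤ q)
    (d n B C : ℕ) (hdB : d ≤ B) (hBC : B + C ≤ n) :
    q ^ d * (1 - q) ^ (n - d) ≤ q ^ B * (1 - q) ^ C := by
  have h1q : (0:ℝ) ≤ 1 - q := by linarith
  have e1 : n - d = (B - d) + ((n - B - C) + C) := by omega
  rw [e1, pow_add, pow_add]
  have h1 : (1 - q) ^ (B - d) ≤ q ^ (B - d) := pow_le_pow_left₀ h1q hhalf _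
  have h2 : (1 - q) ^ (n - B - C) ≤ 1 := pow_le_one₀ h1q (by linarith)
  have hA : (0:ℝ) ≤ (1 - q) ^ C := pow_nonneg h1q _
  have step : (1 - q) ^ (n - B - C) * (1 - q) ^ C ≤ 1 * (1 - q) ^ C :=
    mul_le_mul_of_nonneg_right h2 hA
  have step2 : (1 - q) ^ (B - d) * ((1 - q) ^ (n - B - C) * (1 - q) ^ C)
      ≤ q ^ (B - d) * (1 * (1 - q) ^ C) :=
    mul_le_mul h1 step (mul_nonneg (pow_nonneg h1q _) hA) (pow_nonneg hq0 _)
  calc q ^ d * ((1 - q) ^ (B - d) * ((1 - q) ^ (n - B - C) * (1 - q) ^ C))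
      ≤ q ^ d * (q ^ (B - d) * (1 * (1 - q) ^ C)) :=
        mul_le_mul_of_nonneg_left step2 (pow_nonneg hq0 _)
    _ = q ^ B * (1 - q) ^ C := by
        rw [one_mul, ← mul_assoc, ← pow_add]
        congr 2
        omega

private lemma key_le (q : ℝ) (hq0 : 0 ≤ q) (hhalf : q ≤ 1 - q)
    (d n B C : ℕ) (hdn : d ≤ n) (hBd : B ≤ d) (hBC : B + C ≤ n) :
    q ^ d * (1 - q) ^ (n - d) ≤ q ^ B * (1 - q) ^ C := by
  have h1q : 0 ≤ 1 - q := le_trans hq0 hhalf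
  have h1 : q ^ (d - B) ≤ (1 - q) ^ (d - B) := pow_le_pow_left₀ hq0 hhalf _
  have h2 : q ^ (d - B) * (1 - q) ^ (n - d) ≤ (1 - q) ^ (d - B) * (1 - q) ^ (n - d) :=
    mul_le_mul_of_nonneg_right h1 (pow_nonneg h1q _)
  have h3 : (1 - q) ^ (d - B) * (1 - q) ^ (n - d) = (1 - q) ^ (n - B) := by
    rw [← pow_add]; congr 1; omega
  have h4 : (1 - q) ^ (n - B) ≤ (1 - q) ^ C := by
    apply pow_le_pow_of_le_one h1q (by linarith)
    omega
  have h5 : q ^ (d - B) * (1 - q) ^ (n - d) ≤ (1 - q) ^ C := by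
    calc q ^ (d - B) * (1 - q) ^ (n - d) ≤ (1 - q) ^ (n - B) := h3 ▸ h2
      _ ≤ (1 - q) ^ C := h4
  calc q ^ d * (1 - q) ^ (n - d)
      = q ^ B * (q ^ (d - B) * (1 - q) ^ (n - d)) := by
        rw [← mul_assoc, ← pow_add]
        congr 2
        omega
    _ ≤ q ^ B * (1 - q) ^ C := mul_le_mul_of_nonneg_left h5 (pow_nonneg hq0 _)

private lemma s_formula (p : ℝ) (k : ℕ) : s p k = 1/2 + (1 - 2*p)^k / 2 := by
  induction k with
  | zero => norm_num [s]
  | succ k ih =>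
    have : s p (k+1) = fp p (s p k) := by
      simp [s, Function.iterate_succ_apply']
    rw [this, ih, fp, pow_succ]
    ring

private lemma s_bounds (p : ℝ) (hp : p ∈ Set.Ioo (1/2 : ℝ) 1) (k : ℕ) (hk : 1 ≤ k) :
    1 - p ≤ s p k ∧ s p k ≤ (1 - p)^2 + p^2 := by
  obtain ⟨hp1, hp2⟩ := hp
  have hc0 : (0:ℝ) ≤ 2*p - 1 := by linarith
  have hc1 : (2*p - 1 : ℝ) ≤ 1 := by linarith
  have habs : |1 - 2*p| = 2*p - 1 := by
    rw [abs_of_nonpos (by linarith)]; ring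
  constructor
  · rw [s_formula]
    have h1 : |(1 - 2*p)^k| ≤ 2*p - 1 := by
      rw [abs_pow, habs]
      exact pow_le_of_le_one hc0 hc1 (by omega)
    have h2 : -(2*p - 1) ≤ (1 - 2*p)^k := by
      have := neg_abs_le ((1 - 2*p)^k)
      linarith
    linarith
  · rw [s_formula]
    have hkey : (1 - 2*p)^k ≤ (2*p - 1)^2 := by
      rcases Nat.even_or_odd k with hk2 | hk2
      · have hk3 : 2 ≤ k := by
          obtain ⟨m, hm⟩ := hk2; omega
        have : (1 - 2*p)^k = (2*p - 1)^k := by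
          rw [show (1 - 2*p : ℝ) = -(2*p - 1) by ring, hk2.neg_pow]
        rw [this]
        exact pow_le_pow_of_le_one hc0 hc1 hk3
      · have : (1 - 2*p)^k = -((2*p - 1)^k) := by
          rw [show (1 - 2*p : ℝ) = -(2*p - 1) by ring, hk2.neg_pow]
        rw [this]
        have : (0:ℝ) ≤ (2*p-1)^k := pow_nonneg hc0 _
        nlinarith [sq_nonneg (2*p - 1)]
    nlinarith

/-- For `p ∈ (1/2, 1)`, `β = (1-p)² + p²`, any `q ∈ (0,1)` and any `x` in a
stepping stone `S_k` (`1 ≤ k ≤ N`): if `q ≥ 1/2` then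
`P(x' = 1^n) ≤ q^⌈pn⌉ (1-q)^⌊(1-p)n⌋`, and if `q < 1/2` then
`P(x' = 1^n) ≤ q^⌈(1-β)n⌉ (1-q)^⌊βn⌋`. -/
theorem prob_optimum_from_stone_p_large (p : ℝ) (hp : p ∈ Set.Ioo (1/2 : ℝ) 1)
    (q : ℝ) (hq : q ∈ Set.Ioo (0 : ℝ) 1) (n k : ℕ) (hk1 : 1 ≤ k) (hkN : k ≤ NN p n)
    (x : Fin n → Bool) (hx : inStone p k x) :
    (1/2 ≤ q →
      flipProb q x (allOnes n) ≤ q ^ ⌈p * (n : ℝ)⌉₊ * (1 - q) ^ ⌊(1 - p) * (n : ℝ)⌋₊) ∧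
    (q < 1/2 →
      flipProb q x (allOnes n) ≤
        q ^ ⌈(1 - ((1 - p)^2 + p^2)) * (n : ℝ)⌉₊ *
          (1 - q) ^ ⌊((1 - p)^2 + p^2) * (n : ℝ)⌋₊) := by
  obtain ⟨hp1, hp2⟩ := hp
  obtain ⟨hq0, hq1⟩ := hq
  set β : ℝ := (1 - p)^2 + p^2 with hβ
  have hβhalf : 1/2 ≤ β := by rw [hβ]; nlinarith [sq_nonneg (2*p - 1)]
  have hβ1 : β ≤ 1 := by rw [hβ]; nlinarith
  have hn0 : (0:ℝ) ≤ (n:ℝ) := Nat.cast_nonneg n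
  obtain ⟨hsL, hsU⟩ := s_bounds p ⟨hp1, hp2⟩ k hk1
  -- the number of ones
  set o : ℕ := ones x with hoo
  have hon : o ≤ n := by
    have := Finset.card_filter_le (Finset.univ : Finset (Fin n)) (fun i => x i = true)
    simpa [hoo, ones] using this
  have ho : (o : ℤ) = ⌊(n : ℝ) * s p k⌋ := hx
  -- hamming distance to all ones
  have hham : hamming x (allOnes n) = n - o := by
    have hsplit := Finset.card_filter_add_card_filter_not
      (s := (Finset.univ : Finset (Fin n))) (p := fun i => x i = true)
    have hcard : (Finset.univ : Finset (Fin n)).card = n := by simp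
    have heq : (Finset.univ.filter fun i => x i ≠ allOnes n i)
        = (Finset.univ.filter fun i => ¬ (x i = true)) := by
      apply Finset.filter_congr
      intro i _
      simp [allOnes]
    rw [hamming, heq, hoo, ones] at *
    omega
  -- integer bounds on o
  have hoL : ⌊(n : ℝ) * (1 - p)⌋ ≤ (o : ℤ) := by
    rw [ho]
    exact Int.floor_le_floor (mul_le_mul_of_nonneg_left hsL hn0)
  have hoU : (o : ℤ) ≤ ⌊(n : ℝ) * β⌋ := by
    rw [ho]
    exact Int.floor_le_floor (mul_le_mul_of_nonneg_left hsU hn0)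
  have hoLR : (n : ℝ) * (1 - p) - 1 < (o : ℝ) := by
    have h1 := Int.sub_one_lt_floor ((n : ℝ) * (1 - p))
    have h2 : ((⌊(n : ℝ) * (1 - p)⌋ : ℤ) : ℝ) ≤ (o : ℝ) := by exact_mod_cast hoL
    linarith
  have hoUR : (o : ℝ) ≤ (n : ℝ) * β := by
    have h2 : ((o : ℤ) : ℝ) ≤ ((⌊(n : ℝ) * β⌋ : ℤ) : ℝ) := by exact_mod_cast hoU
    have h3 := Int.floor_le ((n : ℝ) * β)
    push_cast at h2
    linarith
  constructor
  · -- q ≥ 1/2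
    intro hhalf
    set B := ⌈p * (n : ℝ)⌉₊ with hB
    set C := ⌊(1 - p) * (n : ℝ)⌋₊ with hC
    rw [flipProb, hham]
    apply key_ge q (le_of_lt hq0) (le_of_lt hq1) (by linarith)
    · -- n - o ≤ B
      have h1 : p * (n : ℝ) ≤ (B : ℝ) := Nat.le_ceil _
      have hring : p * (n : ℝ) + (n : ℝ) * (1 - p) = (n : ℝ) := by ring
      have h2 : ((n : ℝ)) < (B : ℝ) + (o : ℝ) + 1 := by linarith
      have h3 : n < B + o + 1 := by exact_mod_cast h2
      omega
    · -- B + C ≤ n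
      have h1 : (B : ℝ) < p * (n : ℝ) + 1 :=
        Nat.ceil_lt_add_one (mul_nonneg (by linarith) hn0)
      have h2 : (C : ℝ) ≤ (1 - p) * (n : ℝ) :=
        Nat.floor_le (mul_nonneg (by linarith) hn0)
      have hring : p * (n : ℝ) + (1 - p) * (n : ℝ) = (n : ℝ) := by ring
      have h3 : (B : ℝ) + (C : ℝ) < (n : ℝ) + 1 := by linarith
      have h4 : B + C < n + 1 := by exact_mod_cast h3
      omega
  · -- q < 1/2
    intro hhalf
    set B := ⌈(1 - β) * (n : ℝ)⌉₊ with hB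
    set C := ⌊β * (n : ℝ)⌋₊ with hC
    rw [flipProb, hham]
    have h1mβ : (0:ℝ) ≤ (1 - β) * (n : ℝ) := mul_nonneg (by linarith) hn0
    have hBC : B + C ≤ n := by
      have h1 : (B : ℝ) < (1 - β) * (n : ℝ) + 1 := Nat.ceil_lt_add_one h1mβ
      have h2 : (C : ℝ) ≤ β * (n : ℝ) := Nat.floor_le (mul_nonneg (by linarith) hn0)
      have hring : (1 - β) * (n : ℝ) + β * (n : ℝ) = (n : ℝ) := by ring
      have h3 : (B : ℝ) + (C : ℝ) < (n : ℝ) + 1 := by linarith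
      have h4 : B + C < n + 1 := by exact_mod_cast h3
      omega
    apply key_le q (le_of_lt hq0) (by linarith) _ _ _ _ (by omega) ?_ hBC
    -- B ≤ n - o
    have h1 : (B : ℝ) < (1 - β) * (n : ℝ) + 1 := Nat.ceil_lt_add_one h1mβ
    have hring : (1 - β) * (n : ℝ) + (n : ℝ) * β = (n : ℝ) := by ring
    have h2 : (B : ℝ) + (o : ℝ) < (n : ℝ) + 1 := by linarith
    have h3 : B + o < n + 1 := by exact_mod_cast h2
    omega

end DSS
end

section
/- Let p ∈ (0,1) with p ≠ 1/2 and set β = (1−p)² + p². Then for every q ∈ (0,1), q^{1−β} (1−q)^β < (1−p)^{1−p} p^p. -/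
open Finset
open scoped Classical

namespace DSS

/-! Weighted AM–GM bounds `q^(1-β) (1-q)^β` by its value `(1-β)^(1-β) β^β` at `q = 1-β`, which
is `exp (-H β)` for the binary entropy `H`. Since `β - 1/2 = 2 (p - 1/2)²`, `β` is strictly closer
to `1/2` than `p` is, and `H`, being symmetric about `1/2` and strictly decreasing on `[1/2, 1]`,
satisfies `H p < H β`; finally `exp (-H p) = (1-p)^(1-p) p^p`. -/

open Real

lemma rpow_mul_one_sub_rpow_le {q b : ℝ} (hq₀ : 0 ≤ q) (hq₁ : q ≤ 1) (hb : b ∈ Set.Ioo 0 1) :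
    q ^ (1 - b) * (1 - q) ^ b ≤ (1 - b) ^ (1 - b) * b ^ b := by
  obtain ⟨hb₀, hb₁⟩ := hb
  have hb₁' : 0 < 1 - b := by linarith
  have amgm := geom_mean_le_arith_mean2_weighted hb₁'.le hb₀.le
    (div_nonneg hq₀ hb₁'.le) (div_nonneg (sub_nonneg.2 hq₁) hb₀.le) (sub_add_cancel 1 b)
  have hsum : (1 - b) * (q / (1 - b)) + b * ((1 - q) / b) = 1 := by field_simp; ring
  rw [hsum, div_rpow hq₀ hb₁'.le, div_rpow (sub_nonneg.2 hq₁) hb₀.le, div_mul_div_comm,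
    div_le_one (by positivity)] at amgm
  exact amgm

lemma one_sub_rpow_mul_rpow_eq_exp_neg_binEntropy {b : ℝ} (hb : b ∈ Set.Ioo 0 1) :
    (1 - b) ^ (1 - b) * b ^ b = exp (-binEntropy b) := by
  rw [rpow_def_of_pos (sub_pos.2 hb.2), rpow_def_of_pos hb.1, ← exp_add, binEntropy,
    log_inv, log_inv]
  ring_nf

lemma binEntropy_eq_binEntropy_two_inv_add_abs (x : ℝ) :
    binEntropy x = binEntropy (2⁻¹ + |x - 2⁻¹|) := by
  rcases le_total 2⁻¹ x with hx | hx
  · rw [abs_of_nonneg (sub_nonneg.2 hx), add_sub_cancel]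
  · rw [abs_of_nonpos (sub_nonpos.2 hx), binEntropy_two_inv_add, sub_neg_eq_add, add_sub_cancel]

lemma binEntropy_lt_binEntropy_of_abs_sub_two_inv_lt {x y : ℝ} (hy : y ∈ Set.Icc 0 1)
    (hxy : |x - 2⁻¹| < |y - 2⁻¹|) : binEntropy y < binEntropy x := by
  have hy' : |y - 2⁻¹| ≤ 2⁻¹ := abs_le.2 ⟨by linarith [hy.1], by linarith [hy.2]⟩
  rw [binEntropy_eq_binEntropy_two_inv_add_abs x, binEntropy_eq_binEntropy_two_inv_add_abs y]
  refine binEntropy_strictAntiOn ⟨?_, ?_⟩ ⟨?_, ?_⟩ (by linarith) <;>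
    linarith [abs_nonneg (x - 2⁻¹)]

lemma abs_one_sub_sq_add_sq_sub_two_inv_lt {p : ℝ} (hp : p ∈ Set.Ioo 0 1) (hp2 : p ≠ 1/2) :
    |(1 - p) ^ 2 + p ^ 2 - 2⁻¹| < |p - 2⁻¹| := by
  have hsq : (1 - p) ^ 2 + p ^ 2 - 2⁻¹ = 2 * |p - 2⁻¹| ^ 2 := by rw [sq_abs]; ring
  have hpos : 0 < |p - 2⁻¹| := abs_pos.2 (by norm_num at hp2 ⊢; exact sub_ne_zero.2 hp2)
  have hlt : |p - 2⁻¹| < 2⁻¹ := abs_lt.2 ⟨by linarith [hp.1], by linarith [hp.2]⟩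
  rw [hsq, abs_of_nonneg (by positivity)]
  nlinarith

/-- For `p ∈ (0,1)` with `p ≠ 1/2` and `β = (1-p)² + p²`, every `q ∈ (0,1)`
satisfies `q^(1-β) (1-q)^β < (1-p)^(1-p) p^p`. -/
theorem ineq_with_beta (p : ℝ) (hp : p ∈ Set.Ioo (0 : ℝ) 1) (hp2 : p ≠ 1/2)
    (q : ℝ) (hq : q ∈ Set.Ioo (0 : ℝ) 1) :
    q ^ (1 - ((1 - p)^2 + p^2)) * (1 - q) ^ ((1 - p)^2 + p^2) <
      (1 - p) ^ (1 - p) * p ^ p := by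
  set β := (1 - p) ^ 2 + p ^ 2
  have hcloser := abs_one_sub_sq_add_sq_sub_two_inv_lt hp hp2
  have hβ : β ∈ Set.Ioo 0 1 := ⟨by have := hp.1; positivity, by nlinarith [mul_pos hp.1 (sub_pos.2 hp.2)]⟩
  calc q ^ (1 - β) * (1 - q) ^ β
      ≤ (1 - β) ^ (1 - β) * β ^ β := rpow_mul_one_sub_rpow_le hq.1.le hq.2.le hβ
    _ = exp (-binEntropy β) := one_sub_rpow_mul_rpow_eq_exp_neg_binEntropy hβ
    _ < exp (-binEntropy p) :=
        exp_lt_exp.2 <| neg_lt_neg <|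
          binEntropy_lt_binEntropy_of_abs_sub_two_inv_lt (Set.Ioo_subset_Icc_self hp) hcloser
    _ = (1 - p) ^ (1 - p) * p ^ p := (one_sub_rpow_mul_rpow_eq_exp_neg_binEntropy hp).symm

end DSS
end

section
/- Fix p ∈ (0,1) with p ≠ 1/2. There exists a constant c > 0 such that for all n, every 1 ≤ k ≤ N, and every x ∈ S_k: if x' is obtained from x by flipping each bit independently with probability p, then P(x' ∈ S_{k−1}) ≥ c · (p^p (1−p)^{1−p})^n. In particular, the probability of moving from any stepping stone S_k to the next-higher-fitness level set S_{k−1} in one mutation step is Ω(1/α^n), where α = 1/(p^p(1−p)^{1−p}). -/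
open Finset
open scoped Classical

namespace DSS

lemma exists_ones_add_eq_and_hamming_eq {n : ℕ} (x : Fin n → Bool) {a b : ℕ}
    (ha : a ≤ n - ones x) (hb : b ≤ ones x) :
    ∃ y : Fin n → Bool, ones y + b = ones x + a ∧ hamming x y = a + b := by
  set O := Finset.univ.filter fun i => x i = true
  have hO : O.card = ones x := rfl
  have hOc : Oᶜ.card = n - ones x := by rw [Finset.card_compl, hO, Fintype.card_fin]
  obtain ⟨A, hAO, rfl⟩ := Finset.exists_subset_card_eq (s := Oᶜ) (hOc ▸ ha)
  obtain ⟨B, hBO, rfl⟩ := Finset.exists_subset_card_eq (s := O) hb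
  have hAB : Disjoint A B := Finset.disjoint_of_subset_left hAO
    (Finset.disjoint_of_subset_right hBO disjoint_compl_left)
  have hAOB : Disjoint A (O \ B) := Finset.disjoint_of_subset_left hAO
    (Finset.disjoint_of_subset_right Finset.sdiff_subset disjoint_compl_left)
  refine ⟨fun i => decide (i ∈ A ∪ O \ B), ?_, ?_⟩
  · have hones : ones (fun i => decide (i ∈ A ∪ O \ B)) = A.card + (O.card - B.card) := by
      rw [ones, ← Finset.card_sdiff_of_subset hBO, ← Finset.card_union_of_disjoint hAOB]
      congr 1
      ext
      simp
    have := Finset.card_le_card hBO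
    omega
  · rw [hamming, ← Finset.card_union_of_disjoint hAB]
    congr 1
    ext i
    have hA := @hAO i
    have hB := @hBO i
    simp only [O, Finset.mem_compl, Finset.mem_filter, Finset.mem_univ, true_and] at hA hB
    by_cases hx : x i <;> by_cases hiA : i ∈ A <;> by_cases hiB : i ∈ B <;> simp_all [O]

lemma exists_ones_eq_and_hamming_eq_sub {n : ℕ} (x : Fin n → Bool) {t : ℕ}
    (hxt : ones x ≤ t) (htn : t ≤ n) :
    ∃ y : Fin n → Bool, ones y = t ∧ hamming x y = t - ones x := by
  obtain ⟨y, hy, hd⟩ := exists_ones_add_eq_and_hamming_eq x (a := t - ones x) (b := 0)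
    (by omega) (Nat.zero_le _)
  exact ⟨y, by omega, hd⟩

lemma exists_ones_eq_and_hamming_max {n : ℕ} (x : Fin n → Bool) {t : ℕ} (htn : t ≤ n) :
    ∃ y : Fin n → Bool, ones y = t ∧
      (hamming x y = ones x + t ∨ hamming x y + ones x + t = 2 * n) := by
  have hx := ones_le x
  by_cases h : ones x + t ≤ n
  · obtain ⟨y, hy, hd⟩ := exists_ones_add_eq_and_hamming_eq x (a := t) (b := ones x)
      (by omega) le_rfl
    exact ⟨y, by omega, .inl (by omega)⟩
  · obtain ⟨y, hy, hd⟩ := exists_ones_add_eq_and_hamming_eq x (a := n - ones x) (b := n - t)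
      (by omega) (by omega)
    exact ⟨y, by omega, .inr (by omega)⟩

lemma flipProb_le_mutProb {n : ℕ} {q : ℝ} (hq : q ∈ Set.Icc (0 : ℝ) 1)
    (x : Fin n → Bool) {y : Fin n → Bool} {E : Set (Fin n → Bool)} (hy : y ∈ E) :
    flipProb q x y ≤ mutProb q x E := by
  have hnonneg : ∀ z, 0 ≤ flipProb q x z := fun z =>
    mul_nonneg (pow_nonneg hq.1 _) (pow_nonneg (sub_nonneg.2 hq.2) _)
  calc flipProb q x y = if y ∈ E then flipProb q x y else 0 := (if_pos hy).symm
    _ ≤ mutProb q x E := Finset.single_le_sum (f := fun z => if z ∈ E then flipProb q x z else 0)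
        (fun z _ => by split_ifs <;> simp [hnonneg]) (Finset.mem_univ y)

lemma pow_mul_pow_sub_eq_rpow_mul {p : ℝ} (hp : p ∈ Set.Ioo (0 : ℝ) 1) {d n : ℕ} (hdn : d ≤ n) :
    p ^ d * (1 - p) ^ (n - d) =
      (p / (1 - p)) ^ ((d : ℝ) - p * n) * (p ^ p * (1 - p) ^ (1 - p)) ^ n := by
  have hp0 : 0 < p := hp.1
  have hq0 : 0 < 1 - p := sub_pos.2 hp.2
  rw [← Real.rpow_natCast, ← Real.rpow_natCast, ← Real.rpow_natCast, Nat.cast_sub hdn,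
    Real.rpow_def_of_pos hp0, Real.rpow_def_of_pos hq0, Real.rpow_def_of_pos (div_pos hp0 hq0),
    Real.rpow_def_of_pos hp0, Real.rpow_def_of_pos hq0, ← Real.exp_add, ← Real.exp_add,
    Real.rpow_def_of_pos (Real.exp_pos _), Real.log_exp, ← Real.exp_add,
    Real.log_div hp0.ne' hq0.ne']
  congr 1
  ring

lemma flipProb_eq_rpow_mul {p : ℝ} (hp : p ∈ Set.Ioo (0 : ℝ) 1) {n : ℕ} (x y : Fin n → Bool) :
    flipProb p x y =
      (p / (1 - p)) ^ ((hamming x y : ℝ) - p * n) * (p ^ p * (1 - p) ^ (1 - p)) ^ n :=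
  pow_mul_pow_sub_eq_rpow_mul hp (hamming_le x y)

lemma s_succ (p : ℝ) (k : ℕ) : s p (k + 1) = fp p (s p k) :=
  Function.iterate_succ_apply' _ _ _

lemma mapsTo_fp {p : ℝ} (hp : p ∈ Set.Icc (0 : ℝ) 1) :
    Set.MapsTo (fp p) (Set.Icc 0 1) (Set.Icc 0 1) := fun x hx => by
  obtain ⟨hp0, hp1⟩ := hp
  obtain ⟨hx0, hx1⟩ := hx
  constructor <;> simp only [fp] <;> nlinarith

lemma mapsTo_fp_of_le_half {p : ℝ} (hp0 : 0 ≤ p) (hp : p ≤ 1 / 2) :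
    Set.MapsTo (fp p) (Set.Icc (1 / 2) 1) (Set.Icc (1 / 2) 1) := fun x hx => by
  obtain ⟨hx0, hx1⟩ := hx
  constructor <;> simp only [fp] <;> nlinarith

lemma s_mem_Icc {p : ℝ} (hp : p ∈ Set.Icc (0 : ℝ) 1) (k : ℕ) : s p k ∈ Set.Icc 0 1 :=
  (mapsTo_fp hp).iterate k ⟨zero_le_one, le_rfl⟩

lemma half_le_s {p : ℝ} (hp0 : 0 ≤ p) (hp : p ≤ 1 / 2) (k : ℕ) : 1 / 2 ≤ s p k :=
  ((mapsTo_fp_of_le_half hp0 hp).iterate k ⟨by norm_num, le_rfl⟩).1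

lemma inStone_iff {p : ℝ} (hp : p ∈ Set.Icc (0 : ℝ) 1) {n : ℕ} (k : ℕ) (x : Fin n → Bool) :
    inStone p k x ↔ ones x = ⌊(n : ℝ) * s p k⌋₊ := by
  rw [inStone, ← Int.natCast_floor_eq_floor (mul_nonneg n.cast_nonneg (s_mem_Icc hp k).1)]
  exact Nat.cast_inj

lemma floor_mul_s_le {p : ℝ} (hp : p ∈ Set.Icc (0 : ℝ) 1) (n k : ℕ) : ⌊(n : ℝ) * s p k⌋₊ ≤ n :=
  Nat.floor_le_of_le (mul_le_of_le_one_right n.cast_nonneg (s_mem_Icc hp k).2)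

lemma inStone.cast_ones_le {p : ℝ} {n k : ℕ} {x : Fin n → Bool} (hx : inStone p k x) :
    (ones x : ℝ) ≤ n * s p k := by
  have := Int.floor_le ((n : ℝ) * s p k)
  rwa [← hx, Int.cast_natCast] at this

lemma inStone.lt_cast_ones_add_one {p : ℝ} {n k : ℕ} {x : Fin n → Bool} (hx : inStone p k x) :
    (n : ℝ) * s p k < ones x + 1 := by
  have := Int.lt_floor_add_one ((n : ℝ) * s p k)
  rwa [← hx, Int.cast_natCast] at this

section NextStone

variable {p : ℝ} {n j : ℕ} {x : Fin n → Bool}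

lemma exists_inStone_hamming_le (hp0 : 0 ≤ p) (hp : p ≤ 1 / 2) (hx : inStone p (j + 1) x) :
    ∃ y : Fin n → Bool, inStone p j y ∧ (hamming x y : ℝ) ≤ p * n + 1 := by
  have hpI : p ∈ Set.Icc (0 : ℝ) 1 := ⟨hp0, by linarith⟩
  have hsj := s_mem_Icc hpI j
  have hstep : s p j - s p (j + 1) = p * (2 * s p j - 1) := by rw [s_succ, fp]; ring
  have hxt : ones x ≤ ⌊(n : ℝ) * s p j⌋₊ := by
    rw [(inStone_iff hpI _ x).1 hx]
    refine Nat.floor_le_floor (mul_le_mul_of_nonneg_left ?_ n.cast_nonneg)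
    nlinarith [half_le_s hp0 hp j]
  obtain ⟨y, hy, hd⟩ := exists_ones_eq_and_hamming_eq_sub x hxt (floor_mul_s_le hpI n j)
  have hyj : inStone p j y := (inStone_iff hpI j y).2 hy
  refine ⟨y, hyj, ?_⟩
  rw [hd, ← hy, Nat.cast_sub (hy ▸ hxt)]
  nlinarith [hyj.cast_ones_le, hx.lt_cast_ones_add_one,
    mul_nonneg (mul_nonneg n.cast_nonneg hp0) (sub_nonneg.2 hsj.2)]

lemma exists_inStone_hamming_ge (hp : p ∈ Set.Icc (0 : ℝ) 1) (hx : inStone p (j + 1) x) :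
    ∃ y : Fin n → Bool, inStone p j y ∧ p * n - 2 ≤ (hamming x y : ℝ) := by
  obtain ⟨y, hy, hd⟩ := exists_ones_eq_and_hamming_max x (floor_mul_s_le hp n j)
  have hyj : inStone p j y := (inStone_iff hp j y).2 hy
  refine ⟨y, hyj, ?_⟩
  have hsj := s_mem_Icc hp j
  have hsum : s p j + s p (j + 1) = p + 2 * (1 - p) * s p j := by rw [s_succ, fp]; ring
  have hq : 0 ≤ (n : ℝ) * (1 - p) := mul_nonneg n.cast_nonneg (sub_nonneg.2 hp.2)
  rw [← hy] at hd
  rcases hd with hd | hd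
  · rw [hd, Nat.cast_add]
    nlinarith [hyj.lt_cast_ones_add_one, hx.lt_cast_ones_add_one, mul_nonneg hq hsj.1]
  · have hd' : (hamming x y : ℝ) + ones x + ones y = 2 * n := by exact_mod_cast hd
    nlinarith [hyj.cast_ones_le, hx.cast_ones_le, mul_nonneg hq (sub_nonneg.2 hsj.2)]

end NextStone

theorem prob_next_stone_general (p : ℝ) (hp : p ∈ Set.Ioo (0 : ℝ) 1) :
    ∃ c : ℝ, 0 < c ∧ ∀ n k : ℕ, 1 ≤ k → k ≤ NN p n → ∀ x : Fin n → Bool, inStone p k x →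
      c * (p ^ p * (1 - p) ^ (1 - p)) ^ n ≤
        mutProb p x {y : Fin n → Bool | inStone p (k - 1) y} := by
  set r := p / (1 - p)
  have hq : 0 < 1 - p := sub_pos.2 hp.2
  have hr : 0 < r := div_pos hp.1 hq
  refine ⟨min r (r⁻¹ ^ 2), lt_min hr (by positivity), fun n k hk _ x hx => ?_⟩
  obtain ⟨j, rfl⟩ : ∃ j, k = j + 1 := ⟨k - 1, by omega⟩
  suffices ∃ y, inStone p j y ∧ min r (r⁻¹ ^ 2) ≤ r ^ ((hamming x y : ℝ) - p * n) by
    obtain ⟨y, hy, hc⟩ := this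
    calc min r (r⁻¹ ^ 2) * (p ^ p * (1 - p) ^ (1 - p)) ^ n
        ≤ r ^ ((hamming x y : ℝ) - p * n) * (p ^ p * (1 - p) ^ (1 - p)) ^ n := by
          gcongr
          exact pow_nonneg (mul_nonneg (Real.rpow_nonneg hp.1.le _) (Real.rpow_nonneg hq.le _)) _
      _ = flipProb p x y := (flipProb_eq_rpow_mul hp x y).symm
      _ ≤ _ := flipProb_le_mutProb (Set.Ioo_subset_Icc_self hp) x hy
  rcases le_or_gt p (1 / 2) with hp2 | hp2
  · obtain ⟨y, hy, hd⟩ := exists_inStone_hamming_le hp.1.le hp2 hx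
    refine ⟨y, hy, (min_le_left _ _).trans ?_⟩
    calc r = r ^ (1 : ℝ) := (Real.rpow_one r).symm
      _ ≤ _ := Real.rpow_le_rpow_of_exponent_ge hr ((div_le_one hq).2 (by linarith))
          (by linarith)
  · obtain ⟨y, hy, hd⟩ := exists_inStone_hamming_ge (Set.Ioo_subset_Icc_self hp) hx
    refine ⟨y, hy, (min_le_right _ _).trans ?_⟩
    calc r⁻¹ ^ 2 = r ^ (-2 : ℝ) := by rw [Real.rpow_neg hr.le, inv_pow]; norm_cast
      _ ≤ _ := Real.rpow_le_rpow_of_exponent_le ((one_le_div hq).2 (by linarith))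
          (by linarith)

/-- For fixed `p ∈ (0,1)`, `p ≠ 1/2`, there is `c > 0` such that for all `n`,
all `1 ≤ k ≤ N` and all `x ∈ S_k`, a single mutation step with rate `p` moves `x` into
`S_(k-1)` with probability at least `c · (p^p (1-p)^(1-p))^n`. -/
theorem prob_next_stone (p : ℝ) (hp : p ∈ Set.Ioo (0 : ℝ) 1) (hp2 : p ≠ 1/2) :
    ∃ c : ℝ, 0 < c ∧ ∀ n k : ℕ, 1 ≤ k → k ≤ NN p n → ∀ x : Fin n → Bool, inStone p k x →
      c * (p ^ p * (1 - p) ^ (1 - p)) ^ n ≤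
        mutProb p x {y : Fin n → Bool | inStone p (k - 1) y} :=
  prob_next_stone_general p hp

end DSS
end
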